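/- arXiv:math/0502216 — 11 statements merged into one kernel-verified Lean document; each statement's English description precedes it below -/
import Mathlib

section
/- For every k with 0 ≤ k ≤ g, the subgroup ℤ^m + ℤγ(1) + ⋯ + ℤγ(k) of ℚ^m is equal to M_k. -/
/-- The image of `ℤ^m` in `ℚ^m`. -/
def intLattice (m : ℕ) : Set (Fin m → ℚ) :=
  Set.range (fun v : Fin m → ℤ => fun i => (v i : ℚ))

/-- `M_k = ℤ^m + ℤ a(1) + ⋯ + ℤ a(k)` as an additive subgroup of `ℚ^m`. -/
def Mlat (m : ℕ) (a : ℕ → Fin m → ℚ) (k : ℕ) : AddSubgroup (Fin m → ℚ) :=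
  AddSubgroup.closure (intLattice m ∪ a '' Set.Icc 1 k)

/-- `n_k = [M_k : M_{k-1}]`, the index of `M_{k-1}` in `M_k`. -/
noncomputable def nIdx (m : ℕ) (a : ℕ → Fin m → ℚ) (k : ℕ) : ℕ :=
  (Mlat m a (k - 1)).relIndex (Mlat m a k)

/-- `γ(1) = a(1)` and `γ(k+1) = n_k • γ(k) + a(k+1) - a(k)`. -/
noncomputable def gam (m : ℕ) (a : ℕ → Fin m → ℚ) : ℕ → (Fin m → ℚ)
  | 0 => 0
  | 1 => a 1
  | k + 2 => nIdx m a (k + 1) • gam m a (k + 1) + a (k + 2) - a (k + 1)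

private lemma clos_mono {V : Type*} [AddCommGroup V] (S : Set V) (f : ℕ → V) {k l : ℕ}
    (h : k ≤ l) :
    AddSubgroup.closure (S ∪ f '' Set.Icc 1 k) ≤ AddSubgroup.closure (S ∪ f '' Set.Icc 1 l) :=
  AddSubgroup.closure_mono
    (Set.union_subset_union_right _ (Set.image_mono (Set.Icc_subset_Icc_right h)))

private lemma mem_clos {V : Type*} [AddCommGroup V] (S : Set V) (f : ℕ → V) {j k : ℕ}
    (h1 : 1 ≤ j) (h2 : j ≤ k) :
    f j ∈ AddSubgroup.closure (S ∪ f '' Set.Icc 1 k) :=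
  AddSubgroup.subset_closure (Or.inr ⟨j, ⟨h1, h2⟩, rfl⟩)

/-- For every `0 ≤ k ≤ g`, the subgroup `ℤ^m + ℤ γ(1) + ⋯ + ℤ γ(k)` equals `M_k`. -/
theorem gamma_generates_Mlat
    (n m g : ℕ) (hn : 1 ≤ n) (hm : 1 ≤ m) (hg : 1 ≤ g)
    (a : ℕ → Fin m → ℚ)
    (hna : ∀ k, 1 ≤ k → k ≤ g → ∀ i, ∃ z : ℤ, (n : ℚ) * a k i = (z : ℚ))
    (k : ℕ) (hkg : k ≤ g) :
    AddSubgroup.closure (intLattice m ∪ gam m a '' Set.Icc 1 k) = Mlat m a k := by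
  induction k with
  | zero =>
    have h0 : Set.Icc 1 0 = (∅ : Set ℕ) := Set.Icc_eq_empty (by norm_num)
    simp [Mlat, h0]
  | succ k ih =>
    have hΓ := ih (Nat.le_of_succ_le hkg)
    apply le_antisymm
    · rw [AddSubgroup.closure_le]
      rintro x (hx | ⟨j, ⟨hj1, hj2⟩, rfl⟩)
      · exact AddSubgroup.subset_closure (Or.inl hx)
      · by_cases hjk : j ≤ k
        · have h1 : gam m a j ∈ Mlat m a k := by
            rw [← hΓ]; exact mem_clos _ _ hj1 hjk
          exact clos_mono (intLattice m) a (Nat.le_succ k) h1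
        · have hj : j = k + 1 := le_antisymm hj2 (not_le.mp hjk)
          subst hj
          cases k with
          | zero =>
            have e : gam m a 1 = a 1 := rfl
            rw [e]
            exact mem_clos _ _ le_rfl le_rfl
          | succ j =>
            have e : gam m a (j + 2) =
                nIdx m a (j + 1) • gam m a (j + 1) + a (j + 2) - a (j + 1) := rfl
            have hg1 : gam m a (j + 1) ∈ Mlat m a (j + 1) := by
              rw [← hΓ]; exact mem_clos _ _ (Nat.le_add_left 1 j) le_rfl
            have hg1' : gam m a (j + 1) ∈ Mlat m a (j + 2) :=
              clos_mono (intLattice m) a (Nat.le_succ _) hg1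
            have ha2 : a (j + 2) ∈ Mlat m a (j + 2) :=
              mem_clos _ _ (Nat.le_add_left 1 (j + 1)) le_rfl
            have ha1 : a (j + 1) ∈ Mlat m a (j + 2) :=
              mem_clos _ _ (Nat.le_add_left 1 j) (Nat.le_succ _)
            rw [e]
            exact sub_mem (add_mem (AddSubgroup.nsmul_mem _ hg1' _) ha2) ha1
    · show AddSubgroup.closure (intLattice m ∪ a '' Set.Icc 1 (k + 1)) ≤ _
      rw [AddSubgroup.closure_le]
      rintro x (hx | ⟨j, ⟨hj1, hj2⟩, rfl⟩)
      · exact AddSubgroup.subset_closure (Or.inl hx)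
      · by_cases hjk : j ≤ k
        · have h1 : a j ∈ Mlat m a k := mem_clos _ _ hj1 hjk
          rw [← hΓ] at h1
          exact clos_mono (intLattice m) (gam m a) (Nat.le_succ k) h1
        · have hj : j = k + 1 := le_antisymm hj2 (not_le.mp hjk)
          subst hj
          cases k with
          | zero =>
            have e : a 1 = gam m a 1 := rfl
            rw [e]
            exact mem_clos _ _ le_rfl le_rfl
          | succ j =>
            have e : gam m a (j + 2) =
                nIdx m a (j + 1) • gam m a (j + 1) + a (j + 2) - a (j + 1) := rfl
            have ea : a (j + 2) =
                gam m a (j + 2) - nIdx m a (j + 1) • gam m a (j + 1) + a (j + 1) := by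
              rw [e]; abel
            have hg2 : gam m a (j + 2) ∈
                AddSubgroup.closure (intLattice m ∪ gam m a '' Set.Icc 1 (j + 2)) :=
              mem_clos _ _ (Nat.le_add_left 1 (j + 1)) le_rfl
            have hg1 : gam m a (j + 1) ∈
                AddSubgroup.closure (intLattice m ∪ gam m a '' Set.Icc 1 (j + 2)) :=
              mem_clos _ _ (Nat.le_add_left 1 j) (Nat.le_succ _)
            have ha1 : a (j + 1) ∈
                AddSubgroup.closure (intLattice m ∪ gam m a '' Set.Icc 1 (j + 2)) := by
              have : a (j + 1) ∈ Mlat m a (j + 1) :=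
                mem_clos _ _ (Nat.le_add_left 1 j) le_rfl
              rw [← hΓ] at this
              exact clos_mono (intLattice m) (gam m a) (Nat.le_succ _) this
            rw [ea]
            exact add_mem (sub_mem hg2 (AddSubgroup.nsmul_mem _ hg1 _)) ha1
end

section
/- For every k with 1 ≤ k ≤ g, the order of the class of γ(k) in the quotient group M_k/M_{k-1} is exactly n_k. -/
lemma Mlat_mono (m : ℕ) (a : ℕ → Fin m → ℚ) {j k : ℕ} (h : j ≤ k) :
    Mlat m a j ≤ Mlat m a k := by
  apply AddSubgroup.closure_mono
  apply Set.union_subset_union_right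
  exact Set.image_mono (Set.Icc_subset_Icc_right h)

lemma a_mem_Mlat (m : ℕ) (a : ℕ → Fin m → ℚ) {i k : ℕ} (h1 : 1 ≤ i) (h2 : i ≤ k) :
    a i ∈ Mlat m a k :=
  AddSubgroup.subset_closure (Set.mem_union_right _ ⟨i, ⟨h1, h2⟩, rfl⟩)

/-- Every element of `M_k` is `z • a k` plus an element of `M_{k-1}`. -/
lemma exists_sub_zsmul (m : ℕ) (a : ℕ → Fin m → ℚ) {k : ℕ} (hk : 1 ≤ k)
    {x : Fin m → ℚ} (hx : x ∈ Mlat m a k) :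
    ∃ z : ℤ, x - z • a k ∈ Mlat m a (k - 1) := by
  induction hx using AddSubgroup.closure_induction with
  | mem y hy =>
    rcases hy with hy | ⟨i, ⟨hi1, hik⟩, rfl⟩
    · exact ⟨0, by
        have h : y ∈ Mlat m a (k - 1) := AddSubgroup.subset_closure (Set.mem_union_left _ hy)
        simpa using h⟩
    · rcases eq_or_lt_of_le hik with rfl | hlt
      · exact ⟨1, by simpa using AddSubgroup.zero_mem _⟩
      · refine ⟨0, by simpa using a_mem_Mlat m a hi1 (by omega)⟩
  | zero => exact ⟨0, by simpa using (Mlat m a (k - 1)).zero_mem⟩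
  | add y z hy hz ihy ihz =>
    obtain ⟨zy, hzy⟩ := ihy
    obtain ⟨zz, hzz⟩ := ihz
    refine ⟨zy + zz, ?_⟩
    have : y + z - (zy + zz) • a k = (y - zy • a k) + (z - zz • a k) := by
      rw [add_zsmul]; abel
    rw [this]
    exact (Mlat m a (k - 1)).add_mem hzy hzz
  | neg y hy ihy =>
    obtain ⟨zy, hzy⟩ := ihy
    refine ⟨-zy, ?_⟩
    have : -y - (-zy) • a k = -(y - zy • a k) := by rw [neg_zsmul]; abel
    rw [this]
    exact (Mlat m a (k - 1)).neg_mem hzy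

/-- `γ(k) - a(k) ∈ M_{k-1}` and `γ(k) ∈ M_k` for `k ≥ 1`. -/
lemma gam_sub_a_mem (m : ℕ) (a : ℕ → Fin m → ℚ) :
    ∀ k, 1 ≤ k → gam m a k - a k ∈ Mlat m a (k - 1) ∧ gam m a k ∈ Mlat m a k := by
  intro k hk
  induction k with
  | zero => omega
  | succ k ih =>
    rcases Nat.eq_or_lt_of_le hk with h1 | h1
    · constructor
      · simpa [gam, ← h1] using (Mlat m a 0).zero_mem
      · simpa [gam, ← h1] using a_mem_Mlat m a le_rfl le_rfl
    · have hk1 : 1 ≤ k := by omega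
      obtain ⟨ih1, ih2⟩ := ih hk1
      obtain ⟨k, rfl⟩ : ∃ j, k = j + 1 := ⟨k - 1, by omega⟩
      have hgam : gam m a (k + 2) = nIdx m a (k + 1) • gam m a (k + 1)
          + a (k + 2) - a (k + 1) := rfl
      constructor
      · have : gam m a (k + 2) - a (k + 2)
            = nIdx m a (k + 1) • gam m a (k + 1) - a (k + 1) := by
          rw [hgam]; abel
        rw [show k + 2 - 1 = k + 1 from rfl, this]
        exact (Mlat m a (k + 1)).sub_mem ((Mlat m a (k + 1)).nsmul_mem ih2 _)
          (a_mem_Mlat m a (by omega) le_rfl)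
      · rw [hgam]
        refine (Mlat m a (k + 2)).sub_mem ((Mlat m a (k + 2)).add_mem
          ((Mlat m a (k + 2)).nsmul_mem (Mlat_mono m a (by omega) ih2) _)
          (a_mem_Mlat m a (by omega) le_rfl)) (a_mem_Mlat m a (by omega) (by omega))

/-- For every `1 ≤ k ≤ g`, the order of the class of `γ(k)` in `M_k / M_{k-1}`
is exactly `n_k`. -/
theorem addOrderOf_gamma_eq_index
    (n m g : ℕ) (hn : 1 ≤ n) (hm : 1 ≤ m) (hg : 1 ≤ g)
    (a : ℕ → Fin m → ℚ)
    (hna : ∀ k, 1 ≤ k → k ≤ g → ∀ i, ∃ z : ℤ, (n : ℚ) * a k i = (z : ℚ))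
    (k : ℕ) (hk1 : 1 ≤ k) (hkg : k ≤ g)
    (hgk : gam m a k ∈ Mlat m a k) :
    addOrderOf
        ((QuotientAddGroup.mk (⟨gam m a k, hgk⟩ : Mlat m a k)) :
          (Mlat m a k) ⧸ (Mlat m a (k - 1)).addSubgroupOf (Mlat m a k)) = nIdx m a k := by
  have hak : a k ∈ Mlat m a k := a_mem_Mlat m a hk1 le_rfl
  have hdiff : gam m a k - a k ∈ Mlat m a (k - 1) := (gam_sub_a_mem m a k hk1).1
  -- the two classes agree
  have heq : (QuotientAddGroup.mk (⟨gam m a k, hgk⟩ : Mlat m a k) :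
      (Mlat m a k) ⧸ (Mlat m a (k - 1)).addSubgroupOf (Mlat m a k))
      = QuotientAddGroup.mk (⟨a k, hak⟩ : Mlat m a k) := by
    rw [QuotientAddGroup.eq]
    show -(⟨gam m a k, hgk⟩ : Mlat m a k) + ⟨a k, hak⟩ ∈
      (Mlat m a (k - 1)).addSubgroupOf (Mlat m a k)
    have : -(gam m a k) + a k ∈ Mlat m a (k - 1) := by
      have := (Mlat m a (k - 1)).neg_mem hdiff
      simpa [neg_sub, sub_eq_neg_add] using this
    exact this
  rw [heq]
  -- the class of `a k` generates the quotient
  have hgen : ∀ q : (Mlat m a k) ⧸ (Mlat m a (k - 1)).addSubgroupOf (Mlat m a k),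
      q ∈ AddSubgroup.zmultiples
        (QuotientAddGroup.mk (⟨a k, hak⟩ : Mlat m a k)) := by
    intro q
    induction q using QuotientAddGroup.induction_on with
    | H x =>
      obtain ⟨z, hz⟩ := exists_sub_zsmul m a hk1 x.2
      refine ⟨z, ?_⟩
      show (z • (QuotientAddGroup.mk (⟨a k, hak⟩ : Mlat m a k)) :
          (Mlat m a k) ⧸ (Mlat m a (k - 1)).addSubgroupOf (Mlat m a k))
          = QuotientAddGroup.mk x
      have hmk : (z • (QuotientAddGroup.mk (⟨a k, hak⟩ : Mlat m a k)) :
          (Mlat m a k) ⧸ (Mlat m a (k - 1)).addSubgroupOf (Mlat m a k))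
          = QuotientAddGroup.mk (z • (⟨a k, hak⟩ : Mlat m a k)) := rfl
      rw [hmk, QuotientAddGroup.eq]
      show -(z • (⟨a k, hak⟩ : Mlat m a k)) + x ∈
        (Mlat m a (k - 1)).addSubgroupOf (Mlat m a k)
      have : -(z • a k) + (x : Fin m → ℚ) ∈ Mlat m a (k - 1) := by
        simpa [sub_eq_neg_add] using hz
      exact this
  rw [addOrderOf_eq_card_of_forall_mem_zmultiples hgen]
  unfold nIdx AddSubgroup.relIndex AddSubgroup.index
  rfl
end

section
/- Let p ≥ 0 be an integer and l ∈ (ℤ_{>0})^m. If i and j are indices with k_j < k_i and l_i > p, then b_{k_i}(l) − b_{k_j}(l) ≥ a_i(k_i)·l_i > 0; consequently it is impossible that simultaneously l_j > p and p − l_j ≥ b_{k_i}(l) − b_{k_j}(l). In other words, two indices i, j with k_i ≠ k_j cannot both have coordinate greater than p when l satisfies the condition C2 at the index with larger k. -/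
/-- The linear form `b_k(l) = Σ_i a_i(k) l_i`. -/
def bform (m : ℕ) (a : ℕ → Fin m → ℚ) (k : ℕ) (l : Fin m → ℤ) : ℚ :=
  ∑ i, a k i * (l i : ℚ)

lemma amono_le (m g : ℕ) (a : ℕ → Fin m → ℚ)
    (hamono : ∀ k, 1 ≤ k → k < g → ∀ i, a k i ≤ a (k + 1) i)
    {k k' : ℕ} (h1 : 1 ≤ k) (h2 : k ≤ k') (h3 : k' ≤ g) (i : Fin m) :
    a k i ≤ a k' i := by
  induction k' with
  | zero => omega
  | succ n ih =>
    rcases Nat.lt_or_ge k (n+1) with h | h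
    · exact le_trans (ih (by omega) (by omega)) (hamono n (by omega) (by omega) i)
    · have : k = n + 1 := by omega
      subst this; rfl

/-- If `k_j < k_i` and `l_i > p`, then `b_{k_i}(l) - b_{k_j}(l) ≥ a_i(k_i)·l_i > 0`;
consequently it is impossible that simultaneously `l_j > p` and
`p - l_j ≥ b_{k_i}(l) - b_{k_j}(l)`. -/
theorem no_two_large_coordinates
    (m g : ℕ) (hm : 1 ≤ m) (hg : 1 ≤ g)
    (a : ℕ → Fin m → ℚ)
    (ha0 : ∀ k, 1 ≤ k → k ≤ g → ∀ i, 0 ≤ a k i)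
    (hamono : ∀ k, 1 ≤ k → k < g → ∀ i, a k i ≤ a (k + 1) i)
    (ki : Fin m → ℕ)
    (hki : ∀ i, 1 ≤ ki i ∧ ki i ≤ g ∧ a (ki i) i ≠ 0 ∧
      ∀ k, 1 ≤ k → k < ki i → a k i = 0)
    (p : ℕ) (l : Fin m → ℤ) (hl : ∀ i, 0 < l i)
    (i j : Fin m) (hkji : ki j < ki i) (hli : (p : ℤ) < l i) :
    a (ki i) i * (l i : ℚ) ≤ bform m a (ki i) l - bform m a (ki j) l ∧
    0 < a (ki i) i * (l i : ℚ) ∧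
    ¬((p : ℤ) < l j ∧
        bform m a (ki i) l - bform m a (ki j) l ≤ (p : ℚ) - (l j : ℚ)) := by
  obtain ⟨hi1, hi2, hi3, hi4⟩ := hki i
  obtain ⟨hj1, hj2, hj3, hj4⟩ := hki j
  have hpos : 0 < a (ki i) i * (l i : ℚ) := by
    have h1 : 0 < a (ki i) i := lt_of_le_of_ne (ha0 _ hi1 hi2 i) (Ne.symm hi3)
    have h2 : (0 : ℚ) < (l i : ℚ) := by exact_mod_cast hl i
    positivity
  have hzero : a (ki j) i = 0 := hi4 _ hj1 hkji
  have hdiff : a (ki i) i * (l i : ℚ) ≤ bform m a (ki i) l - bform m a (ki j) l := by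
    unfold bform
    rw [← Finset.sum_sub_distrib]
    have hterm : ∀ t : Fin m, t ∈ Finset.univ →
        (if t = i then a (ki i) i * (l i : ℚ) else 0) ≤
          a (ki i) t * (l t : ℚ) - a (ki j) t * (l t : ℚ) := by
      intro t _
      by_cases ht : t = i
      · subst ht; simp [hzero]
      · simp only [if_neg ht]
        rw [← sub_mul]
        have h1 : a (ki j) t ≤ a (ki i) t :=
          amono_le m g a hamono hj1 (le_of_lt hkji) hi2 t
        have h2 : (0 : ℚ) ≤ (l t : ℚ) := by exact_mod_cast (hl t).le
        have := sub_nonneg.mpr h1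
        positivity
    calc a (ki i) i * (l i : ℚ)
        = ∑ t, (if t = i then a (ki i) i * (l i : ℚ) else 0) := by
          rw [Finset.sum_ite_eq' Finset.univ i]; simp
      _ ≤ ∑ t, (a (ki i) t * (l t : ℚ) - a (ki j) t * (l t : ℚ)) :=
          Finset.sum_le_sum hterm
  refine ⟨hdiff, hpos, ?_⟩
  rintro ⟨hlj, hle⟩
  have h1 : (p : ℚ) - (l j : ℚ) < 0 := by
    have : (p : ℚ) < (l j : ℚ) := by exact_mod_cast hlj
    linarith
  linarith
end

section
/- Let p ≥ 0 be an integer and l ∈ (ℤ_{>0})^m, and let i, j be indices with k_j ≠ k_i, l_i > p and l_j ≤ p; in the case k_j < k_i assume additionally that p − l_j ≥ b_{k_i}(l) − b_{k_j}(l). Then l_i − b_{k_i}(l) > l_j − b_{k_j}(l). -/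
/-- Let `i, j` be indices with `k_j ≠ k_i`, `l_i > p` and `l_j ≤ p`; in the case
`k_j < k_i` assume additionally that `p - l_j ≥ b_{k_i}(l) - b_{k_j}(l)`. Then
`l_i - b_{k_i}(l) > l_j - b_{k_j}(l)`. -/
theorem max_defect_strict
    (m g : ℕ) (hm : 1 ≤ m) (hg : 1 ≤ g)
    (a : ℕ → Fin m → ℚ)
    (ha0 : ∀ k, 1 ≤ k → k ≤ g → ∀ i, 0 ≤ a k i)
    (hamono : ∀ k, 1 ≤ k → k < g → ∀ i, a k i ≤ a (k + 1) i)
    (ki : Fin m → ℕ)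
    (hki : ∀ i, 1 ≤ ki i ∧ ki i ≤ g ∧ a (ki i) i ≠ 0 ∧
      ∀ k, 1 ≤ k → k < ki i → a k i = 0)
    (p : ℕ) (l : Fin m → ℤ) (hl : ∀ i, 0 < l i)
    (i j : Fin m) (hne : ki j ≠ ki i)
    (hli : (p : ℤ) < l i) (hlj : l j ≤ (p : ℤ))
    (hC : ki j < ki i →
      bform m a (ki i) l - bform m a (ki j) l ≤ (p : ℚ) - (l j : ℚ)) :
    (l j : ℚ) - bform m a (ki j) l < (l i : ℚ) - bform m a (ki i) l := by
  have hmonoa : ∀ k k', 1 ≤ k → k ≤ k' → k' ≤ g → ∀ t, a k t ≤ a k' t := by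
    intro k k' hk hkk' hk'g t
    induction k' with
    | zero => omega
    | succ n ih =>
      rcases Nat.lt_or_ge k (n+1) with h | h
      · have hn : a k t ≤ a n t := ih (by omega) (by omega)
        exact hn.trans (hamono n (by omega) (by omega) t)
      · have : k = n + 1 := by omega
        subst this; exact le_refl _
  rcases lt_or_gt_of_ne hne with hlt | hgt
  · -- ki j < ki i, use hC
    have h := hC hlt
    have hp : (p : ℚ) < (l i : ℚ) := by exact_mod_cast hli
    linarith
  · -- ki i < ki j : bform monotone
    have hb : bform m a (ki i) l ≤ bform m a (ki j) l := by
      unfold bform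
      apply Finset.sum_le_sum
      intro t _
      have hlt : (0 : ℚ) ≤ (l t : ℚ) := by exact_mod_cast (hl t).le
      exact mul_le_mul_of_nonneg_right
        (hmonoa (ki i) (ki j) (hki i).1 hgt.le (hki j).2.1 t) hlt
    have hp1 : (l j : ℚ) ≤ (p : ℚ) := by exact_mod_cast hlj
    have hp2 : (p : ℚ) < (l i : ℚ) := by exact_mod_cast hli
    linarith
end

section
/- The sets D_{q,i}(m)_p, for 0 ≤ q ≤ m and 1 ≤ i ≤ m, are pairwise disjoint and their union is D(m)_p; that is, every l ∈ D(m)_p belongs to exactly one set D_{q,i}(m)_p. -/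
/-- The kernel of `M : ℤ^m → (ℤ/nℤ)^g`, `l ↦ (n b_1(l) mod n, …, n b_g(l) mod n)`:
since `n b_k(l) ∈ ℤ`, it consists of those `l` with `b_k(l) ∈ ℤ` for `1 ≤ k ≤ g`. -/
def kerM (m g : ℕ) (a : ℕ → Fin m → ℚ) : Set (Fin m → ℤ) :=
  {l | ∀ k, 1 ≤ k → k ≤ g → ∃ z : ℤ, bform m a k l = (z : ℚ)}

/-- The set `Σ_{m,p}`. -/
def SigmaSet (m p : ℕ) (a : ℕ → Fin m → ℚ) (ki : Fin m → ℕ) : Set (Fin m → ℤ) :=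
  {l | ∀ i, l i ≤ (p : ℤ)} ∪
  ⋃ i : Fin m,
    {l | (p : ℤ) < l i ∧ bform m a (ki i) l ≤ (p : ℚ) ∧
      ∀ j, ki j < ki i →
        bform m a (ki i) l - bform m a (ki j) l ≤ (p : ℚ) - (l j : ℚ)}

/-- `D(m)_p = Σ_{m,p} ∩ Ker M ∩ (ℤ_{>0})^m`. -/
def Dset (m g p : ℕ) (a : ℕ → Fin m → ℚ) (ki : Fin m → ℕ) : Set (Fin m → ℤ) :=
  SigmaSet m p a ki ∩ kerM m g a ∩ {l | ∀ i, 0 < l i}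

/-- The sets `D_{q,i}(m)_p`. -/
def Dqi (m g p : ℕ) (a : ℕ → Fin m → ℚ) (ki : Fin m → ℕ) (q : ℕ) (i : Fin m) :
    Set (Fin m → ℤ) :=
  if q = 0 then
    Dset m g p a ki ∩
      {l | (∀ j, l j ≤ (p : ℤ)) ∧
        (∀ j, (l j : ℚ) - bform m a (ki j) l ≤ (l i : ℚ) - bform m a (ki i) l) ∧
        (∀ j, j < i → (l j : ℚ) - bform m a (ki j) l < (l i : ℚ) - bform m a (ki i) l)}
  else
    Dset m g p a ki ∩
      {l | (p : ℤ) < l i ∧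
        (Finset.univ.filter fun j => (p : ℤ) < l j).card = q ∧
        (∀ j, (l j : ℚ) - bform m a (ki j) l ≤ (l i : ℚ) - bform m a (ki i) l) ∧
        (∀ j, j < i → (l j : ℚ) - bform m a (ki j) l < (l i : ℚ) - bform m a (ki i) l)}

/-- The sets `D_{q,i}(m)_p`, `0 ≤ q ≤ m`, `1 ≤ i ≤ m`, are pairwise disjoint and their
union is `D(m)_p`: every `l ∈ D(m)_p` belongs to exactly one set `D_{q,i}(m)_p`. -/
theorem Dqi_partition
    (n m g p : ℕ) (hn : 1 ≤ n) (hm : 1 ≤ m) (hg : 1 ≤ g)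
    (a : ℕ → Fin m → ℚ)
    (hna : ∀ k, 1 ≤ k → k ≤ g → ∀ i, ∃ z : ℤ, (n : ℚ) * a k i = (z : ℚ))
    (ha0 : ∀ k, 1 ≤ k → k ≤ g → ∀ i, 0 ≤ a k i)
    (hamono : ∀ k, 1 ≤ k → k < g → ∀ i, a k i ≤ a (k + 1) i)
    (ki : Fin m → ℕ)
    (hki : ∀ i, 1 ≤ ki i ∧ ki i ≤ g ∧ a (ki i) i ≠ 0 ∧
      ∀ k, 1 ≤ k → k < ki i → a k i = 0) :
    ∀ l ∈ Dset m g p a ki,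
      ∃! qi : ℕ × Fin m, qi.1 ≤ m ∧ l ∈ Dqi m g p a ki qi.1 qi.2 := by
  intro l hl
  obtain ⟨⟨hSig, hker⟩, hpos⟩ := hl
  have hl' : l ∈ Dset m g p a ki := ⟨⟨hSig, hker⟩, hpos⟩
  -- monotonicity of `a` in `k` on `[1, g]`
  have hamono' : ∀ k k', 1 ≤ k → k ≤ k' → k' ≤ g → ∀ j, a k j ≤ a k' j := by
    intro k k' hk hkk' hk'g j
    induction k' with
    | zero => omega
    | succ k'' ih =>
      rcases Nat.lt_or_ge k (k'' + 1) with h | h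
      · have hk1 : 1 ≤ k'' := by omega
        exact le_trans (ih (by omega) (by omega)) (hamono k'' hk1 (by omega) j)
      · have : k = k'' + 1 := by omega
        simp [this]
  -- monotonicity of `bform` in `k`
  have hbmono : ∀ k k', 1 ≤ k → k ≤ k' → k' ≤ g →
      bform m a k l ≤ bform m a k' l := by
    intro k k' hk hkk' hk'g
    apply Finset.sum_le_sum
    intro j _
    have hlj : (0 : ℚ) ≤ (l j : ℚ) := by exact_mod_cast (hpos j).le
    exact mul_le_mul_of_nonneg_right (hamono' k k' hk hkk' hk'g j) hlj
  -- the function to maximize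
  set f : Fin m → ℚ := fun j => (l j : ℚ) - bform m a (ki j) l with hf
  -- minimal argmax
  have hmne : (Finset.univ : Finset (Fin m)).Nonempty := by
    refine ⟨⟨0, hm⟩, Finset.mem_univ _⟩
  obtain ⟨i0max, _, hi0max⟩ := Finset.exists_max_image Finset.univ f hmne
  set s : Finset (Fin m) := Finset.univ.filter (fun j => ∀ j', f j' ≤ f j) with hs
  have hsne : s.Nonempty := ⟨i0max, by
    simp only [hs, Finset.mem_filter, Finset.mem_univ, true_and]
    exact fun j' => hi0max j' (Finset.mem_univ _)⟩
  set i := s.min' hsne with hidef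
  have hiS : i ∈ s := s.min'_mem hsne
  have hmax : ∀ j, f j ≤ f i := by
    have := hiS
    simp only [hs, Finset.mem_filter, Finset.mem_univ, true_and] at this
    exact this
  have hstrict : ∀ j, j < i → f j < f i := by
    intro j hj
    have hjs : j ∉ s := fun h => absurd (s.min'_le j h) (not_le.mpr hj)
    have hex : ∃ j', f j < f j' := by
      by_contra h
      push_neg at h
      exact hjs (by
        simp only [hs, Finset.mem_filter, Finset.mem_univ, true_and]
        exact h)
    obtain ⟨j', hj'⟩ := hex
    exact lt_of_lt_of_le hj' (hmax j')
  have Hmax : ∀ j, (l j : ℚ) - bform m a (ki j) l ≤ (l i : ℚ) - bform m a (ki i) l := by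
    intro j; have := hmax j; simp only [hf] at this; exact this
  have Hstrict : ∀ j, j < i →
      (l j : ℚ) - bform m a (ki j) l < (l i : ℚ) - bform m a (ki i) l := by
    intro j hj; have := hstrict j hj; simp only [hf] at this; exact this
  set F : Finset (Fin m) := Finset.univ.filter (fun j => (p : ℤ) < l j) with hFdef
  set q := F.card with hq
  have hqm : q ≤ m := by
    calc q ≤ (Finset.univ : Finset (Fin m)).card := Finset.card_filter_le _ _
    _ = m := by simp
  -- key: if some coordinate exceeds p, then coordinate i does
  have hkey : F.Nonempty → (p : ℤ) < l i := by
    rintro ⟨j0, hj0⟩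
    simp only [hFdef, Finset.mem_filter, Finset.mem_univ, true_and] at hj0
    have hnotA : l ∉ {l : Fin m → ℤ | ∀ i, l i ≤ (p : ℤ)} := by
      intro h; exact absurd (h j0) (not_le.mpr hj0)
    have hB : l ∈ ⋃ i : Fin m,
        {l | (p : ℤ) < l i ∧ bform m a (ki i) l ≤ (p : ℚ) ∧
          ∀ j, ki j < ki i →
            bform m a (ki i) l - bform m a (ki j) l ≤ (p : ℚ) - (l j : ℚ)} := by
      rcases hSig with h | h
      · exact absurd h hnotA
      · exact h
    obtain ⟨i1, h1, h2, h3⟩ := Set.mem_iUnion.mp hB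
    by_contra hcon
    push_neg at hcon
    have hconQ : (l i : ℚ) ≤ (p : ℚ) := by exact_mod_cast hcon
    have h1Q : (p : ℚ) < (l i1 : ℚ) := by exact_mod_cast h1
    have hfi : (l i : ℚ) - bform m a (ki i) l ≤ (p : ℚ) - bform m a (ki i1) l := by
      rcases le_or_gt (ki i1) (ki i) with hk | hk
      · have hb := hbmono (ki i1) (ki i) (hki i1).1 hk (hki i).2.1
        linarith
      · have := h3 i hk
        linarith
    have hfi1 : (p : ℚ) - bform m a (ki i1) l < (l i1 : ℚ) - bform m a (ki i1) l := by
      linarith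
    have := Hmax i1
    linarith
  refine ⟨(q, i), ⟨hqm, ?_⟩, ?_⟩
  · -- membership
    by_cases h0 : q = 0
    · have hFe : F = ∅ := Finset.card_eq_zero.mp (hq ▸ h0)
      have hle : ∀ j, l j ≤ (p : ℤ) := by
        intro j
        by_contra h
        push_neg at h
        have : j ∈ F := by
          simp only [hFdef, Finset.mem_filter, Finset.mem_univ, true_and]; exact h
        simp [hFe] at this
      simp only [Dqi, h0, if_pos]
      exact ⟨hl', hle, Hmax, Hstrict⟩
    · have hFne : F.Nonempty := Finset.card_pos.mp (by omega)
      simp only [Dqi, h0, if_neg, ite_false]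
      exact ⟨hl', hkey hFne, hq.symm, Hmax, Hstrict⟩
  · -- uniqueness
    rintro ⟨q', i'⟩ ⟨hq'm, hmem⟩
    have hieq : (∀ j, (l j : ℚ) - bform m a (ki j) l ≤ (l i' : ℚ) - bform m a (ki i') l) →
        (∀ j, j < i' → (l j : ℚ) - bform m a (ki j) l < (l i' : ℚ) - bform m a (ki i') l) →
        i' = i := by
      intro hmax' hstrict'
      rcases lt_trichotomy i' i with h | h | h
      · exact absurd (hmax' i) (not_le.mpr (Hstrict i' h))
      · exact h
      · exact absurd (Hmax i') (not_le.mpr (hstrict' i h))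
    by_cases hq' : q' = 0
    · simp only [Dqi, hq', if_pos] at hmem
      obtain ⟨-, hle, hmax', hstrict'⟩ := hmem
      have hFe : F = ∅ := by
        apply Finset.filter_eq_empty_iff.mpr
        intro j _
        exact not_lt.mpr (hle j)
      have : q = 0 := by simp [hq, hFe]
      simp only [Prod.mk.injEq]
      exact ⟨by omega, hieq hmax' hstrict'⟩
    · simp only [Dqi, hq', if_neg, ite_false] at hmem
      obtain ⟨-, -, hcard, hmax', hstrict'⟩ := hmem
      simp only [Prod.mk.injEq]
      exact ⟨by rw [hq, ← hcard], hieq hmax' hstrict'⟩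
end

section
/- For every p = (p_1,...,p_m) ∈ ℕ^m, every index j with 1 ≤ j ≤ m, and every integer k ≥ 1, one has E_{(p_1,...,kn,...,p_m)} = (Σ_{r=0}^{k-1} u^{rn})·E_{(p_1,...,n,...,p_m)}, where in each subscript only the j-th coordinate is modified. (Equivalently, with 𝕃 := u^{-1} invertible, E_{(...,kn,...)} = ((1−𝕃^{−kn})/(1−𝕃^{−n}))·E_{(...,n,...)}.) -/
/-- `E_p = Σ u^{l_1+⋯+l_m}`, the sum over all `l ∈ K` with `1 ≤ l_i ≤ p_i` for every `i`. -/
noncomputable def Esum {R : Type*} [CommRing R] (m : ℕ) (K : Set (Fin m → ℤ)) (u : R)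
    (p : Fin m → ℕ) : R :=
  letI := Classical.decPred (· ∈ K)
  ∑ l ∈ (Finset.Icc (1 : Fin m → ℤ) (fun i => (p i : ℤ))).filter (· ∈ K),
    u ^ (∑ i, l i).toNat

/-- `E_{(p_1,…,kn,…,p_m)} = (Σ_{r=0}^{k-1} u^{rn}) · E_{(p_1,…,n,…,p_m)}`. -/
theorem Esum_multiple
    {R : Type*} [CommRing R] (n m : ℕ) (hn : 1 ≤ n) (hm : 1 ≤ m) (u : R)
    (K : Set (Fin m → ℤ))
    (hK : ∀ (l : Fin m → ℤ) (j : Fin m), l ∈ K ↔ l + (n : ℤ) • Pi.single j 1 ∈ K)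
    (p : Fin m → ℕ) (j : Fin m) (k : ℕ) (hk : 1 ≤ k) :
    Esum m K u (Function.update p j (k * n)) =
      (∑ r ∈ Finset.range k, u ^ (r * n)) * Esum m K u (Function.update p j n) := by
  classical
  -- K is invariant under shifting coordinate j by any multiple of n
  have hKshift : ∀ (c : ℕ) (l : Fin m → ℤ),
      l ∈ K ↔ l + ((c * n : ℕ) : ℤ) • Pi.single j 1 ∈ K := by
    intro c
    induction c with
    | zero => intro l; simp
    | succ c ih =>
      intro l
      have hs : (((c + 1) * n : ℕ) : ℤ) • Pi.single j (1 : ℤ)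
          = ((c * n : ℕ) : ℤ) • (Pi.single j 1 : Fin m → ℤ) + (n : ℤ) • (Pi.single j 1 : Fin m → ℤ) := by
        rw [← add_smul]; congr 1; push_cast; ring
      rw [hs, ← add_assoc]
      exact (ih l).trans (hK _ j)
  -- characterization of membership in the index set
  have hmem : ∀ (a : ℕ) (l : Fin m → ℤ),
      (l ∈ (Finset.Icc (1 : Fin m → ℤ)
          (fun i => ((Function.update p j a) i : ℤ))).filter (· ∈ K)) ↔
      (l ∈ K ∧ (∀ i, 1 ≤ l i) ∧ (∀ i, i ≠ j → l i ≤ p i) ∧ l j ≤ (a : ℤ)) := by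
    intro a l
    simp only [Finset.mem_filter, Finset.mem_Icc, Pi.le_def, Pi.one_apply,
      Function.update_apply]
    constructor
    · rintro ⟨⟨h1, h2⟩, h3⟩
      refine ⟨h3, h1, fun i hi => ?_, ?_⟩
      · have := h2 i; rwa [if_neg hi] at this
      · have := h2 j; rwa [if_pos rfl] at this
    · rintro ⟨h3, h1, h2, h4⟩
      refine ⟨⟨h1, fun i => ?_⟩, h3⟩
      by_cases hi : i = j
      · subst hi; rwa [if_pos rfl]
      · rw [if_neg hi]; exact h2 i hi
  -- the key step
  have step : ∀ c : ℕ,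
      Esum m K u (Function.update p j (c * n + n)) =
        Esum m K u (Function.update p j (c * n)) +
          u ^ (c * n) * Esum m K u (Function.update p j n) := by
    intro c
    unfold Esum
    rw [← Finset.sum_filter_add_sum_filter_not _ (fun l => l j ≤ ((c * n : ℕ) : ℤ))]
    congr 1
    · -- first part: restriction to l j ≤ c*n gives Esum (c*n)
      apply Finset.sum_congr _ (fun _ _ => rfl)
      ext l
      rw [Finset.mem_filter]
      rw [hmem (c * n + n) l, hmem (c * n) l]
      push_cast
      constructor
      · rintro ⟨⟨h1, h2, h3, h4⟩, h5⟩; exact ⟨h1, h2, h3, by exact_mod_cast h5⟩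
      · rintro ⟨h1, h2, h3, h4⟩
        exact ⟨⟨h1, h2, h3, by omega⟩, by exact_mod_cast h4⟩
    · -- second part: shift by c*n in coordinate j
      rw [Finset.mul_sum]
      refine Finset.sum_nbij' (fun l => l - ((c * n : ℕ) : ℤ) • (Pi.single j 1 : Fin m → ℤ))
        (fun l => l + ((c * n : ℕ) : ℤ) • (Pi.single j 1 : Fin m → ℤ)) ?_ ?_ ?_ ?_ ?_
      · intro l hl
        rw [Finset.mem_filter] at hl
        obtain ⟨hl1, hl2⟩ := hl
        rw [hmem (c * n + n) l] at hl1
        obtain ⟨h1, h2, h3, h4⟩ := hl1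
        rw [hmem n]
        have hval : ∀ i, (l - ((c * n : ℕ) : ℤ) • (Pi.single j 1 : Fin m → ℤ)) i =
            l i - if i = j then ((c * n : ℕ) : ℤ) else 0 := by
          intro i
          simp [Pi.single_apply, mul_ite]
        have hK' : (l - ((c * n : ℕ) : ℤ) • (Pi.single j 1 : Fin m → ℤ)) ∈ K := by
          rw [hKshift c, sub_add_cancel]; exact h1
        refine ⟨hK', fun i => ?_, fun i hi => ?_, ?_⟩
        · beta_reduce; rw [hval i]
          by_cases hi : i = j
          · rw [if_pos hi, hi]
            have := h2 j
            have h5 : ¬ l j ≤ ((c * n : ℕ) : ℤ) := hl2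
            omega
          · rw [if_neg hi]; have := h2 i; omega
        · beta_reduce; rw [hval i, if_neg hi]; have := h3 i hi; omega
        · beta_reduce; rw [hval j, if_pos rfl]
          push_cast at h4 ⊢
          omega
      · intro l hl
        rw [hmem n] at hl
        obtain ⟨h1, h2, h3, h4⟩ := hl
        rw [Finset.mem_filter, hmem (c * n + n)]
        have hval : ∀ i, (l + ((c * n : ℕ) : ℤ) • (Pi.single j 1 : Fin m → ℤ)) i =
            l i + if i = j then ((c * n : ℕ) : ℤ) else 0 := by
          intro i
          simp [Pi.single_apply, mul_ite]
        have hK' : (l + ((c * n : ℕ) : ℤ) • (Pi.single j 1 : Fin m → ℤ)) ∈ K := (hKshift c l).mp h1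
        refine ⟨⟨hK', fun i => ?_, fun i hi => ?_, ?_⟩, ?_⟩
        · beta_reduce; rw [hval i]
          by_cases hi : i = j
          · rw [if_pos hi]; have h0 := Int.natCast_nonneg (c * n); have := h2 i; linarith
          · rw [if_neg hi]; have := h2 i; omega
        · beta_reduce; rw [hval i, if_neg hi]; have := h3 i hi; omega
        · beta_reduce; rw [hval j, if_pos rfl]; push_cast; push_cast at h4; omega
        · beta_reduce; rw [hval j, if_pos rfl]
          have := h2 j; omega
      · intro l _; simp
      · intro l _; simp
      · intro l hl
        rw [Finset.mem_filter] at hl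
        obtain ⟨hl1, hl2⟩ := hl
        rw [hmem (c * n + n) l] at hl1
        obtain ⟨h1, h2, h3, h4⟩ := hl1
        have hsum : ∑ i, (l - ((c * n : ℕ) : ℤ) • (Pi.single j 1 : Fin m → ℤ)) i
            = (∑ i, l i) - ((c * n : ℕ) : ℤ) := by
          simp only [Pi.sub_apply]
          rw [Finset.sum_sub_distrib]
          congr 1
          simp [Pi.single_apply, mul_ite]
        have hpos : (0 : ℤ) ≤ (∑ i, l i) - ((c * n : ℕ) : ℤ) := by
          have hj' : ((c * n : ℕ) : ℤ) + 1 ≤ l j := by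
            have := h2 j; omega
          calc (0 : ℤ) ≤ ∑ i ∈ Finset.univ.erase j, l i :=
                Finset.sum_nonneg (fun i _ => by have := h2 i; omega)
            _ ≤ (∑ i ∈ Finset.univ.erase j, l i) + (l j - ((c * n : ℕ) : ℤ)) := by
                omega
            _ = (∑ i, l i) - ((c * n : ℕ) : ℤ) := by
                rw [← Finset.add_sum_erase _ _ (Finset.mem_univ j)]; ring
        have htn : (∑ i, l i).toNat
            = ((∑ i, l i) - ((c * n : ℕ) : ℤ)).toNat + c * n := by
          omega
        rw [hsum, htn, pow_add, mul_comm]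
  -- main induction on k
  clear hk
  induction k with
  | zero =>
    simp only [Nat.zero_mul, Finset.range_zero, Finset.sum_empty, zero_mul]
    unfold Esum
    apply Finset.sum_eq_zero
    intro l hl
    exfalso
    rw [hmem 0 l] at hl
    obtain ⟨_, h2, _, h4⟩ := hl
    have := h2 j; omega
  | succ c ih =>
    have : (c + 1) * n = c * n + n := by ring
    rw [this, step c, ih, Finset.sum_range_succ, add_mul]
end

section
/- For all tuples p = (p_1,...,p_m) ∈ ℕ^m and k = (k_1,...,k_m) ∈ ℕ^m, one has E_{p+nk} = Σ_{s ∈ {0,1}^m} u^{n·Σ_{i=1}^m k_i(1−s_i)} · E_{q(s)}, where q(s) ∈ ℕ^m is defined by q(s)_i := k_i·n if s_i = 1 and q(s)_i := p_i if s_i = 0. -/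
section
variable {m n : ℕ} {K : Set (Fin m → ℤ)}

lemma shift_single (hK : ∀ (l : Fin m → ℤ) (j : Fin m), l ∈ K ↔ l + (n : ℤ) • Pi.single j 1 ∈ K)
    (c : ℤ) (j : Fin m) (l : Fin m → ℤ) :
    l ∈ K ↔ l + ((n:ℤ) * c) • Pi.single j 1 ∈ K := by
  induction c using Int.induction_on with
  | zero => simp
  | succ i ih =>
      have e : l + ((n:ℤ) * (i + 1)) • Pi.single j 1
          = l + ((n:ℤ) * i) • Pi.single j 1 + (n:ℤ) • Pi.single j 1 := by module
      rw [e, ← hK (l + ((n:ℤ) * i) • Pi.single j 1) j, ih]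
  | pred i ih =>
      have e : l + ((n:ℤ) * (-i:ℤ)) • Pi.single j 1
          = l + ((n:ℤ) * (-i - 1)) • Pi.single j 1 + (n:ℤ) • Pi.single j 1 := by module
      rw [ih, e, ← hK (l + ((n:ℤ) * (-i - 1)) • Pi.single j 1) j]

lemma shift_mul (hK : ∀ (l : Fin m → ℤ) (j : Fin m), l ∈ K ↔ l + (n : ℤ) • Pi.single j 1 ∈ K)
    (c : Fin m → ℤ) (l : Fin m → ℤ) :
    l ∈ K ↔ (l + fun i => (n:ℤ) * c i) ∈ K := by
  have key : ∀ s : Finset (Fin m), ∀ l : Fin m → ℤ,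
      l ∈ K ↔ (l + ∑ j ∈ s, ((n:ℤ) * c j) • Pi.single j 1) ∈ K := by
    intro s
    induction s using Finset.induction with
    | empty => simp
    | @insert j s hj ih =>
        intro l
        rw [Finset.sum_insert hj, ih, shift_single hK (c j) j]
        rw [add_assoc, add_comm (∑ x ∈ s, ((n:ℤ) * c x) • Pi.single x 1)]
  have h := key Finset.univ l
  convert h using 3
  funext i
  rw [Finset.sum_apply]
  simp [Pi.single_apply]

end

/-- `E_{p+nk} = Σ_{s ∈ {0,1}^m} u^{n Σ_i k_i (1-s_i)} · E_{q(s)}`, where `q(s)_i = k_i n`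
if `s_i = 1` and `q(s)_i = p_i` if `s_i = 0`. -/
theorem Esum_add_multiple
    {R : Type*} [CommRing R] (n m : ℕ) (hn : 1 ≤ n) (hm : 1 ≤ m) (u : R)
    (K : Set (Fin m → ℤ))
    (hK : ∀ (l : Fin m → ℤ) (j : Fin m), l ∈ K ↔ l + (n : ℤ) • Pi.single j 1 ∈ K)
    (p k : Fin m → ℕ) :
    Esum m K u (fun i => p i + n * k i) =
      ∑ s : Fin m → Bool,
        u ^ (∑ i, if s i then 0 else n * k i) *
          Esum m K u (fun i => if s i then k i * n else p i) := by
  classical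
  unfold Esum
  rw [← Finset.sum_fiberwise
    (g := fun l : Fin m → ℤ => fun i => decide (l i ≤ ((n * k i : ℕ) : ℤ)))]
  refine Finset.sum_congr rfl fun s _ => ?_
  have hq : (fun i => ((if s i then k i * n else p i : ℕ) : ℤ))
      = fun i => ((if s i then n * k i else p i : ℕ) : ℤ) := by
    funext i; rw [Nat.mul_comm (k i) n]
  rw [hq, Finset.mul_sum]
  set d : Fin m → ℤ := fun i => if s i then 0 else ((n * k i : ℕ) : ℤ) with hd
  have hshift : ∀ l : Fin m → ℤ, l ∈ K ↔ (fun i => l i - d i) ∈ K := by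
    intro l
    have h := shift_mul hK (fun i => if s i then 0 else -(k i : ℤ)) l
    rw [h]
    constructor <;> intro h' <;> (convert h' using 1; funext i; simp only [hd, Pi.add_apply]
      <;> split <;> push_cast <;> ring)
  refine Finset.sum_nbij' (i := fun l => fun i => l i - d i) (j := fun l => fun i => l i + d i)
    ?_ ?_ ?_ ?_ ?_
  · -- maps to
    intro l hl
    simp only [Finset.mem_filter, Finset.mem_Icc, Pi.le_def, funext_iff, Pi.one_apply,
      Set.mem_setOf_eq] at hl ⊢
    obtain ⟨⟨⟨h1, h2⟩, hlK⟩, hs⟩ := hl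
    refine ⟨⟨fun i => ?_, fun i => ?_⟩, (hshift l).mp hlK⟩
    · have ha := hs i; have hb := h1 i; have hc := h2 i
      have h0 : (0:ℤ) ≤ ((n * k i : ℕ) : ℤ) := by positivity
      simp only [hd]
      by_cases hsi : s i = true <;>
        simp [hsi, -Finset.mem_univ] at * <;> omega
    · have ha := hs i; have hb := h1 i; have hc := h2 i
      have h0 : (0:ℤ) ≤ ((n * k i : ℕ) : ℤ) := by positivity
      simp only [hd]
      by_cases hsi : s i = true <;>
        simp [hsi, -Finset.mem_univ] at * <;> push_cast at * <;> omega
  · -- reverse maps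
    intro l hl
    simp only [Finset.mem_filter, Finset.mem_Icc, Pi.le_def, funext_iff, Pi.one_apply,
      Set.mem_setOf_eq] at hl ⊢
    obtain ⟨⟨h1, h2⟩, hlK⟩ := hl
    have hK' : (fun i => l i + d i) ∈ K := by
      rw [hshift]
      convert hlK using 1
      funext i; ring_nf
    refine ⟨⟨⟨fun i => ?_, fun i => ?_⟩, hK'⟩, fun i => ?_⟩
    · have hb := h1 i
      have h0 : (0:ℤ) ≤ ((n * k i : ℕ) : ℤ) := by positivity
      simp only [hd]
      by_cases hsi : s i = true <;> simp [hsi, -Finset.mem_univ] at * <;> omega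
    · have hc := h2 i
      have h0 : (0:ℤ) ≤ ((n * k i : ℕ) : ℤ) := by positivity
      simp only [hd]
      by_cases hsi : s i = true <;> simp [hsi, -Finset.mem_univ] at * <;>
        push_cast at * <;> omega
    · have hb := h1 i; have hc := h2 i
      have h0 : (0:ℤ) ≤ ((n * k i : ℕ) : ℤ) := by positivity
      have hn0 : (1:ℤ) ≤ (n : ℤ) := by exact_mod_cast hn
      simp only [hd]
      by_cases hsi : s i = true <;>
        simp [hsi, not_le, -Finset.mem_univ] at * <;>
        push_cast at * <;> omega
  · intro l _; funext i; ring
  · intro l _; funext i; ring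
  · -- summand equality
    intro l hl
    simp only [Finset.mem_filter, Finset.mem_Icc, Pi.le_def, funext_iff, Pi.one_apply,
      Set.mem_setOf_eq] at hl
    obtain ⟨⟨⟨h1, h2⟩, hlK⟩, hs⟩ := hl
    have hsum : (∑ i, l i) = ((∑ i, if s i then 0 else n * k i : ℕ) : ℤ)
        + ∑ i, (l i - d i) := by
      push_cast
      rw [← Finset.sum_add_distrib]
      refine Finset.sum_congr rfl fun i _ => ?_
      simp only [hd]; split <;> push_cast <;> ring
    have hnn : 0 ≤ ∑ i, (l i - d i) := by
      refine Finset.sum_nonneg fun i _ => ?_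
      have ha := hs i; have hb := h1 i; have hc := h2 i
      have h0 : (0:ℤ) ≤ ((n * k i : ℕ) : ℤ) := by positivity
      simp only [hd]
      by_cases hsi : s i = true <;>
        simp [hsi, -Finset.mem_univ] at * <;> omega
    rw [hsum, Int.toNat_add (by positivity) hnn, pow_add, Int.toNat_natCast]
end

section
/- For all integers p ≥ 0 and k ≥ 0, one has E_{p+nk} = Σ_{s ∈ {0,1}^m} (Σ_{r=0}^{k-1} u^{rn})^{|s|} · u^{kn(m−|s|)} · E_{p,s}, where |s| := #{i : s_i = 1} and E_{p,s} := E_q with q_i := n if s_i = 1 and q_i := p if s_i = 0. -/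
lemma cast_update (m : ℕ) (q : Fin m → ℕ) (j : Fin m) (a : ℕ) :
    (fun i => ((Function.update q j a) i : ℤ)) = Function.update (fun i => (q i : ℤ)) j (a : ℤ) := by
  funext i
  simp [Function.update_apply, apply_ite (fun x : ℕ => (x : ℤ))]

lemma Esum_update_add {R : Type*} [CommRing R] (n m : ℕ) (u : R)
    (K : Set (Fin m → ℤ))
    (hK : ∀ (l : Fin m → ℤ) (j : Fin m), l ∈ K ↔ l + (n : ℤ) • Pi.single j 1 ∈ K)
    (q : Fin m → ℕ) (j : Fin m) (t : ℕ) :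
    Esum m K u (Function.update q j (n + t)) =
      Esum m K u (Function.update q j n) + u ^ n * Esum m K u (Function.update q j t) := by
  classical
  have he : ∀ i, ((n : ℤ) • Pi.single j 1 : Fin m → ℤ) i = if i = j then (n : ℤ) else 0 := by
    intro i
    simp [Pi.single_apply]
  unfold Esum
  rw [cast_update, cast_update, cast_update]
  rw [← Finset.sum_filter_add_sum_filter_not _ (fun l => l j ≤ (n : ℤ))]
  congr 1
  · -- part with l j ≤ n
    rw [Finset.filter_comm]
    congr 2
    ext l
    simp only [Finset.mem_filter, Finset.mem_Icc, Pi.le_def, Function.update_apply, Pi.one_apply]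
    constructor
    · rintro ⟨⟨h1, h2⟩, h3⟩
      refine ⟨h1, fun i => ?_⟩
      by_cases hij : i = j
      · simpa [hij] using h3
      · simpa [hij] using h2 i
    · rintro ⟨h1, h2⟩
      have h3 : l j ≤ (n : ℤ) := by simpa using h2 j
      refine ⟨⟨h1, fun i => ?_⟩, h3⟩
      by_cases hij : i = j
      · rw [hij]
        simp only [if_pos rfl]
        push_cast
        omega
      · simpa [hij] using h2 i
  · -- part with n < l j : shift down by n•single j 1
    rw [Finset.mul_sum]
    refine Finset.sum_nbij' (fun l => l - (n : ℤ) • (Pi.single j 1 : Fin m → ℤ))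
      (fun l => l + (n : ℤ) • (Pi.single j 1 : Fin m → ℤ)) ?_ ?_ ?_ ?_ ?_
    · intro l hl
      simp only [Finset.mem_filter, Finset.mem_Icc, Pi.le_def, not_le, Pi.one_apply,
        Function.update_apply] at hl
      obtain ⟨⟨⟨h1, h2⟩, hk⟩, h3⟩ := hl
      simp only [Finset.mem_filter, Finset.mem_Icc, Pi.le_def, Pi.sub_apply, he, Pi.one_apply,
        Function.update_apply]
      refine ⟨⟨fun i => ?_, fun i => ?_⟩, ?_⟩
      · by_cases hij : i = j
        · have := h1 i; simp [hij] at *; omega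
        · have := h1 i; simp [hij] at *; omega
      · by_cases hij : i = j
        · have := h2 i; simp [hij] at *; omega
        · have := h2 i; simp [hij] at *; omega
      · rw [hK (l - (n : ℤ) • (Pi.single j 1 : Fin m → ℤ)) j]
        simpa using hk
    · intro l hl
      simp only [Finset.mem_filter, Finset.mem_Icc, Pi.le_def, Pi.one_apply,
        Function.update_apply] at hl
      obtain ⟨⟨h1, h2⟩, hk⟩ := hl
      simp only [Finset.mem_filter, Finset.mem_Icc, Pi.le_def, not_le, Pi.add_apply, he,
        Pi.one_apply, Function.update_apply]
      refine ⟨⟨⟨fun i => ?_, fun i => ?_⟩, ?_⟩, ?_⟩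
      · by_cases hij : i = j
        · have := h1 i; simp [hij] at *; omega
        · have := h1 i; simp [hij] at *; omega
      · by_cases hij : i = j
        · have := h2 i; simp [hij] at *; omega
        · have := h2 i; simp [hij] at *; omega
      · rw [← hK l j]; exact hk
      · have := h1 j; simp [he] at this ⊢; omega
    · intro l _; simp
    · intro l _; simp
    · intro l hl
      simp only [Finset.mem_filter, Finset.mem_Icc, Pi.le_def, not_le, Pi.one_apply] at hl
      obtain ⟨⟨⟨h1, h2⟩, hk⟩, h3⟩ := hl
      have hsum : ∑ i, (l - (n : ℤ) • (Pi.single j 1 : Fin m → ℤ)) i = (∑ i, l i) - n := by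
        simp only [Pi.sub_apply, Finset.sum_sub_distrib]
        congr 1
        simp [he, Finset.sum_ite_eq']
      have hnn : 0 ≤ ∑ i, (l - (n : ℤ) • (Pi.single j 1 : Fin m → ℤ)) i := by
        refine Finset.sum_nonneg fun i _ => ?_
        simp only [Pi.sub_apply, he]
        by_cases hij : i = j
        · have := h1 i; simp [hij] at *; omega
        · have := h1 i; simp [hij] at *; omega
      have hT : (∑ i, l i).toNat = (∑ i, (l - (n : ℤ) • (Pi.single j 1 : Fin m → ℤ)) i).toNat + n := by
        omega
      rw [hT, pow_add]
      ring

lemma Esum_update_geom {R : Type*} [CommRing R] (n m : ℕ) (u : R)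
    (K : Set (Fin m → ℤ))
    (hK : ∀ (l : Fin m → ℤ) (j : Fin m), l ∈ K ↔ l + (n : ℤ) • Pi.single j 1 ∈ K)
    (q : Fin m → ℕ) (j : Fin m) (p k : ℕ) :
    Esum m K u (Function.update q j (p + n * k)) =
      (∑ r ∈ Finset.range k, u ^ (r * n)) * Esum m K u (Function.update q j n) +
        u ^ (k * n) * Esum m K u (Function.update q j p) := by
  induction k with
  | zero => simp
  | succ k ih =>
    have h1 : p + n * (k + 1) = n + (p + n * k) := by ring
    rw [h1, Esum_update_add n m u K hK, ih]
    rw [Finset.sum_range_succ']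
    have h2 : ∀ i : ℕ, u ^ ((i + 1) * n) = u ^ n * u ^ (i * n) := by
      intro i; rw [add_mul, one_mul, pow_add]; ring
    simp only [h2, zero_mul, pow_zero]
    rw [← Finset.mul_sum]
    ring

lemma Esum_piecewise_expand {R : Type*} [CommRing R] (n m : ℕ) (u : R)
    (K : Set (Fin m → ℤ))
    (hK : ∀ (l : Fin m → ℤ) (j : Fin m), l ∈ K ↔ l + (n : ℤ) • Pi.single j 1 ∈ K)
    (p k : ℕ) (S : Finset (Fin m)) (q : Fin m → ℕ) :
    Esum m K u (S.piecewise (fun _ => p + n * k) q) =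
      ∑ T ∈ S.powerset,
        (∑ r ∈ Finset.range k, u ^ (r * n)) ^ T.card *
          u ^ (k * n * (S.card - T.card)) *
          Esum m K u (S.piecewise (fun i => if i ∈ T then n else p) q) := by
  classical
  induction S using Finset.induction generalizing q with
  | empty => simp
  | @insert j S hj ih =>
    rw [Finset.piecewise_insert, Esum_update_geom n m u K hK, Finset.update_piecewise_of_notMem _ _ _ hj,
      Finset.update_piecewise_of_notMem _ _ _ hj, ih, ih, Finset.powerset_insert,
      Finset.sum_union, Finset.sum_image]
    · rw [Finset.mul_sum, Finset.mul_sum, add_comm]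
      congr 1
      · -- u^{kn} * Σ_{T⊆S} ... = Σ_{T⊆S} term(T) over insert j S data
        refine Finset.sum_congr rfl fun T hT => ?_
        rw [Finset.mem_powerset] at hT
        have hjT : j ∉ T := fun h => hj (hT h)
        have hfun : S.piecewise (fun i => if i ∈ T then n else p) (Function.update q j p) =
            (insert j S).piecewise (fun i => if i ∈ T then n else p) q := by
          rw [Finset.piecewise_insert, Finset.update_piecewise_of_notMem _ _ _ hj]
          simp [hjT]
        rw [hfun]
        have hc : T.card ≤ S.card := Finset.card_le_card hT
        rw [Finset.card_insert_of_notMem hj]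
        have : k * n * (S.card + 1 - T.card) = k * n + k * n * (S.card - T.card) := by
          have hcc : S.card + 1 - T.card = (S.card - T.card) + 1 := by omega
          rw [hcc]; ring
        rw [this, pow_add]
        ring
      · -- geom * Σ = Σ over insert j T
        refine Finset.sum_congr rfl fun T hT => ?_
        rw [Finset.mem_powerset] at hT
        have hjT : j ∉ T := fun h => hj (hT h)
        have hfun : S.piecewise (fun i => if i ∈ T then n else p) (Function.update q j n) =
            (insert j S).piecewise (fun i => if i ∈ insert j T then n else p) q := by
          funext i
          rw [Finset.piecewise_insert, Finset.update_piecewise_of_notMem _ _ _ hj]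
          by_cases hiS : i ∈ S
          · have hij : i ≠ j := fun h => hj (h ▸ hiS)
            simp [Finset.piecewise_eq_of_mem _ _ _ hiS, Finset.mem_insert, hij,
              Function.update_apply]
          · by_cases hij : i = j
            · subst hij
              simp [Finset.piecewise_eq_of_notMem _ _ _ hiS]
            · simp [Finset.piecewise_eq_of_notMem _ _ _ hiS, Function.update_apply, hij]
        rw [hfun, Finset.card_insert_of_notMem hjT, Finset.card_insert_of_notMem hj]
        have : S.card + 1 - (T.card + 1) = S.card - T.card := by omega
        rw [this, pow_succ]
        ring
    · -- injectivity of insert j on powerset S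
      intro T1 h1 T2 h2 hEq
      rw [Finset.mem_coe, Finset.mem_powerset] at h1 h2
      have hj1 : j ∉ T1 := fun h => hj (h1 h)
      have hj2 : j ∉ T2 := fun h => hj (h2 h)
      have h := congrArg (fun T : Finset (Fin m) => T.erase j) hEq
      simpa [Finset.erase_insert hj1, Finset.erase_insert hj2] using h
    · -- disjoint
      rw [Finset.disjoint_left]
      intro T hT1 hT2
      rw [Finset.mem_powerset] at hT1
      rw [Finset.mem_image] at hT2
      obtain ⟨T', hT', rfl⟩ := hT2
      exact hj (hT1 (Finset.mem_insert_self j T'))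


set_option maxHeartbeats 1000000 in
/-- `E_{p+nk} = Σ_{s ∈ {0,1}^m} (Σ_{r=0}^{k-1} u^{rn})^{|s|} u^{kn(m-|s|)} E_{p,s}`, where
`|s| = #{i : s_i = 1}` and `E_{p,s} = E_q` with `q_i = n` if `s_i = 1`, `q_i = p` else. -/
theorem Esum_diag_add_multiple
    {R : Type*} [CommRing R] (n m : ℕ) (hn : 1 ≤ n) (hm : 1 ≤ m) (u : R)
    (K : Set (Fin m → ℤ))
    (hK : ∀ (l : Fin m → ℤ) (j : Fin m), l ∈ K ↔ l + (n : ℤ) • Pi.single j 1 ∈ K)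
    (p k : ℕ) :
    Esum m K u (fun _ => p + n * k) =
      ∑ s : Fin m → Bool,
        (∑ r ∈ Finset.range k, u ^ (r * n)) ^ (Finset.univ.filter fun i => s i = true).card *
          u ^ (k * n * (m - (Finset.univ.filter fun i => s i = true).card)) *
          Esum m K u (fun i => if s i then n else p) := by
  classical
  have h := Esum_piecewise_expand n m u K hK p k Finset.univ (fun _ => p)
  simp only [Finset.piecewise_univ] at h
  rw [h]
  have hcard : (Finset.univ : Finset (Fin m)).card = m := by
    simp
  refine Finset.sum_nbij' (fun T => fun i => decide (i ∈ T))
    (fun s => Finset.univ.filter (fun i => s i = true)) ?_ ?_ ?_ ?_ ?_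
  · intro T _; exact Finset.mem_univ _
  · intro s _; simp
  · intro T _
    ext i
    simp
  · intro s _
    funext i
    simp
  · intro T _
    have hfilter : (Finset.univ.filter fun i => decide (i ∈ T) = true) = T := by
      ext i; simp
    have harg : (fun i : Fin m => if decide (i ∈ T) then n else p) =
        (fun i => if i ∈ T then n else p) := by
      funext i; simp
    rw [hfilter, hcard, harg]
end

section
/- In the formal power series ring F[[T]] one has the identity Σ_{p≥0} E_p·L^{mp}·T^p = Σ_{p=1}^{n} Σ_{s ∈ {0,1}^m} L^{mp}·T^p · E_{p,s} · (L^{−n}−1)^{−|s|} · Σ_{j=0}^{|s|} binom(|s|, j)·(−1)^j·(1 − L^{jn}·T^n)^{−1}, where the inverses (1 − L^{jn}·T^n)^{−1} exist in F[[T]] because these power series have constant term 1. -/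
open PowerSeries

/-- `E_p = Σ L^{-(l_1+⋯+l_m)}`, the sum over all `l ∈ K` with `1 ≤ l_i ≤ p_i`. -/
noncomputable def EsumZ {F : Type*} [Field F] (m : ℕ) (K : Set (Fin m → ℤ)) (L : F)
    (p : Fin m → ℕ) : F :=
  letI := Classical.decPred (· ∈ K)
  ∑ l ∈ (Finset.Icc (1 : Fin m → ℤ) (fun i => (p i : ℤ))).filter (· ∈ K),
    L ^ (-(∑ i, l i))

lemma geom_inv {F : Type*} [Field F] (n : ℕ) (hn : 1 ≤ n) (a : F) :
    (1 - PowerSeries.C a * (X : PowerSeries F) ^ n)⁻¹ =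
      PowerSeries.mk (fun N => if n ∣ N then a ^ (N / n) else 0) := by
  rw [PowerSeries.inv_eq_iff_mul_eq_one]
  · ext N
    rw [mul_sub, mul_one, map_sub, show PowerSeries.mk (fun N => if n ∣ N then a ^ (N / n) else 0)
        * (PowerSeries.C a * X ^ n) = PowerSeries.C a *
          (PowerSeries.mk (fun N => if n ∣ N then a ^ (N / n) else 0) * X ^ n) by ring,
      PowerSeries.coeff_C_mul, PowerSeries.coeff_mul_X_pow', PowerSeries.coeff_mk,
      PowerSeries.coeff_one, PowerSeries.coeff_mk]
    by_cases h1 : n ∣ N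
    · by_cases h0 : N = 0
      · subst h0
        rw [if_pos h1, if_neg (by omega : ¬ n ≤ 0), if_pos rfl]
        simp
      · have h2 : n ≤ N := Nat.le_of_dvd (by omega) h1
        have h3 : n ∣ N - n := Nat.dvd_sub h1 dvd_rfl
        rw [if_pos h1, if_pos h2, if_pos h3, if_neg h0]
        obtain ⟨t, rfl⟩ := h1
        have ht : 1 ≤ t := by
          rcases Nat.eq_zero_or_pos t with h | h
          · simp [h] at h0
          · exact h
        obtain ⟨u, rfl⟩ : ∃ u, t = u + 1 := ⟨t - 1, by omega⟩
        have e0 : n * (u + 1) - n = n * u := by rw [Nat.mul_succ]; omega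
        rw [e0, Nat.mul_div_cancel_left _ (by omega : 0 < n),
          Nat.mul_div_cancel_left _ (by omega : 0 < n), pow_succ]
        ring
    · have h0 : N ≠ 0 := fun h => h1 (h ▸ dvd_zero n)
      rw [if_neg h1, if_neg h0]
      by_cases h2 : n ≤ N
      · have h3 : ¬ n ∣ N - n := fun hc => h1 (by
          obtain ⟨u, hu⟩ := hc; exact ⟨u + 1, by rw [Nat.mul_succ]; omega⟩)
        rw [if_pos h2, if_neg h3]; ring
      · rw [if_neg h2]; ring
  · have : PowerSeries.constantCoeff (1 - PowerSeries.C a * X ^ n) = 1 := by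
      rw [map_sub, map_mul, map_pow, PowerSeries.constantCoeff_X, zero_pow (by omega), mul_zero,
        map_one, sub_zero]
    rw [this]; exact one_ne_zero

lemma EsumZ_step {F : Type*} [Field F] (n m : ℕ) (hn : 1 ≤ n) (L : F) (hL0 : L ≠ 0)
    (K : Set (Fin m → ℤ))
    (hK : ∀ (l : Fin m → ℤ) (j : Fin m), l ∈ K ↔ l + (n : ℤ) • Pi.single j 1 ∈ K)
    (p : Fin m → ℕ) (j : Fin m) (q : ℕ) (hq : p j = q + n) :
    EsumZ m K L p = EsumZ m K L (Function.update p j n)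
      + L ^ (-(n : ℤ)) * EsumZ m K L (Function.update p j q) := by
  classical
  have hc : (n : ℤ) • (Pi.single j 1 : Fin m → ℤ) = Pi.single j (n : ℤ) := by
    rw [← Pi.single_smul, smul_eq_mul, mul_one]
  have hK' : ∀ (l : Fin m → ℤ), l ∈ K ↔ l + Pi.single j (n : ℤ) ∈ K := by
    intro l; rw [← hc]; exact hK l j
  simp only [EsumZ]
  rw [Finset.mul_sum,
    ← Finset.sum_filter_add_sum_filter_not
    ((Finset.Icc (1 : Fin m → ℤ) fun i => ((p i : ℤ))).filter (· ∈ K))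
    (fun l => l j ≤ (n : ℤ))]
  congr 1
  · apply Finset.sum_congr _ (fun _ _ => rfl)
    ext l
    simp only [Finset.mem_filter, Finset.mem_Icc, Pi.le_def, Pi.one_apply,
      Function.update_apply]
    constructor
    · rintro ⟨⟨⟨h1, h2⟩, hk⟩, h3⟩
      refine ⟨⟨h1, fun i => ?_⟩, hk⟩
      by_cases hij : i = j
      · subst hij; simpa using h3
      · simpa [hij] using h2 i
    · rintro ⟨⟨h1, h2⟩, hk⟩
      have h3 : l j ≤ (n : ℤ) := by simpa using h2 j
      refine ⟨⟨⟨h1, fun i => ?_⟩, hk⟩, h3⟩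
      by_cases hij : i = j
      · subst hij
        have : (n : ℤ) ≤ (p i : ℤ) := by exact_mod_cast (by omega : n ≤ p i)
        omega
      · simpa [hij] using h2 i
  · refine Finset.sum_nbij' (fun l => l - Pi.single j (n : ℤ))
      (fun l => l + Pi.single j (n : ℤ)) ?_ ?_ ?_ ?_ ?_
    · intro l hl
      simp only [Finset.mem_filter, Finset.mem_Icc, Pi.le_def, Pi.one_apply,
        Function.update_apply, not_le] at hl ⊢
      obtain ⟨⟨⟨h1, h2⟩, hk⟩, h3⟩ := hl
      refine ⟨⟨fun i => ?_, fun i => ?_⟩, ?_⟩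
      · by_cases hij : i = j
        · subst hij; simp only [Pi.sub_apply, Pi.single_eq_same]
          have := h1 i; have := h3; omega
        · simpa [Pi.single_apply, hij] using h1 i
      · by_cases hij : i = j
        · subst hij
          rw [if_pos rfl]
          simp only [Pi.sub_apply, Pi.single_eq_same]
          have h2j := h2 i
          have hpq : (p i : ℤ) = (q : ℤ) + (n : ℤ) := by exact_mod_cast congrArg (Nat.cast : ℕ → ℤ) hq
          omega
        · simp only [Pi.sub_apply, Pi.single_apply, hij, if_neg hij, sub_zero]
          simpa [hij] using h2 i
      · have := (hK' (l - Pi.single j (n : ℤ))).symm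
        rw [sub_add_cancel] at this
        exact this.mp hk
    · intro l hl
      simp only [Finset.mem_filter, Finset.mem_Icc, Pi.le_def, Pi.one_apply,
        Function.update_apply, not_le] at hl ⊢
      obtain ⟨⟨h1, h2⟩, hk⟩ := hl
      refine ⟨⟨⟨fun i => ?_, fun i => ?_⟩, (hK' l).mp hk⟩, ?_⟩
      · by_cases hij : i = j
        · subst hij; simp only [Pi.add_apply, Pi.single_eq_same]
          have := h1 i; omega
        · simpa [Pi.single_apply, hij] using h1 i
      · by_cases hij : i = j
        · subst hij
          simp only [Pi.add_apply, Pi.single_eq_same]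
          have h2j := h2 i
          rw [if_pos rfl] at h2j
          have hpq : (p i : ℤ) = (q : ℤ) + (n : ℤ) := by exact_mod_cast congrArg (Nat.cast : ℕ → ℤ) hq
          omega
        · simp only [Pi.add_apply, Pi.single_apply, if_neg hij, add_zero]
          simpa [hij] using h2 i
      · simp only [Pi.add_apply, Pi.single_eq_same]
        have := h1 j; omega
    · intro l _; simp
    · intro l _; simp
    · intro l hl
      simp only [Finset.mem_filter, Finset.mem_Icc, not_le] at hl
      have hsum : (∑ i, ((l - Pi.single j (n : ℤ) : Fin m → ℤ)) i) = (∑ i, l i) - n := by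
        simp only [Pi.sub_apply, Finset.sum_sub_distrib]
        congr 1
        simp [Finset.sum_pi_single']
      rw [hsum, show (-(∑ i, l i) : ℤ) = -(n : ℤ) + -((∑ i, l i) - (n : ℤ)) by ring,
        zpow_add₀ hL0]

lemma EsumZ_coord {F : Type*} [Field F] (n m : ℕ) (hn : 1 ≤ n) (L : F) (hL0 : L ≠ 0)
    (K : Set (Fin m → ℤ))
    (hK : ∀ (l : Fin m → ℤ) (j : Fin m), l ∈ K ↔ l + (n : ℤ) • Pi.single j 1 ∈ K)
    (p : Fin m → ℕ) (j : Fin m) (q k : ℕ) :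
    EsumZ m K L (Function.update p j (q + k * n)) =
      (∑ t ∈ Finset.range k, (L ^ (-(n : ℤ))) ^ t) * EsumZ m K L (Function.update p j n)
      + (L ^ (-(n : ℤ))) ^ k * EsumZ m K L (Function.update p j q) := by
  induction k with
  | zero => simp
  | succ k ih =>
    have step := EsumZ_step n m hn L hL0 K hK (Function.update p j (q + (k + 1) * n)) j
      (q + k * n) (by rw [Function.update_self]; ring)
    rw [Function.update_idem, Function.update_idem] at step
    rw [step, ih, geom_sum_succ]
    ring

lemma EsumZ_multi {F : Type*} [Field F] (n m : ℕ) (hn : 1 ≤ n) (L : F) (hL0 : L ≠ 0)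
    (K : Set (Fin m → ℤ))
    (hK : ∀ (l : Fin m → ℤ) (j : Fin m), l ∈ K ↔ l + (n : ℤ) • Pi.single j 1 ∈ K)
    (q k : ℕ) (S : Finset (Fin m)) (b : Fin m → ℕ) :
    EsumZ m K L (fun i => if i ∈ S then q + k * n else b i) =
      ∑ T ∈ S.powerset,
        (∑ t ∈ Finset.range k, (L ^ (-(n : ℤ))) ^ t) ^ T.card *
          ((L ^ (-(n : ℤ))) ^ k) ^ (S.card - T.card) *
          EsumZ m K L (fun i => if i ∈ S then (if i ∈ T then n else q) else b i) := by
  classical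
  induction S using Finset.induction generalizing b with
  | empty => simp
  | @insert a S ha ih =>
    have hf : (fun i => if i ∈ insert a S then q + k * n else b i)
        = Function.update (fun i => if i ∈ S then q + k * n else b i) a (q + k * n) := by
      funext i
      rcases eq_or_ne i a with rfl | hia
      · simp
      · simp [Function.update_of_ne hia, Finset.mem_insert, hia]
    rw [hf, EsumZ_coord n m hn L hL0 K hK _ a q k]
    have hfn : Function.update (fun i => if i ∈ S then q + k * n else b i) a n
        = (fun i => if i ∈ S then q + k * n else (Function.update b a n) i) := by
      funext i
      rcases eq_or_ne i a with rfl | hia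
      · simp [ha]
      · simp [Function.update_of_ne hia]
    have hfq : Function.update (fun i => if i ∈ S then q + k * n else b i) a q
        = (fun i => if i ∈ S then q + k * n else (Function.update b a q) i) := by
      funext i
      rcases eq_or_ne i a with rfl | hia
      · simp [ha]
      · simp [Function.update_of_ne hia]
    rw [hfn, hfq, ih (Function.update b a n), ih (Function.update b a q),
      Finset.sum_powerset_insert ha, Finset.mul_sum, Finset.mul_sum]
    rw [add_comm]
    congr 1
    · -- x^k branch matches the T ⊆ S terms
      apply Finset.sum_congr rfl
      intro T hT
      rw [Finset.mem_powerset] at hT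
      have hTS : T.card ≤ S.card := Finset.card_le_card hT
      have haT : a ∉ T := fun h => ha (hT h)
      have hfun : (fun i => if i ∈ S then (if i ∈ T then n else q)
            else (Function.update b a q) i)
          = (fun i => if i ∈ insert a S then (if i ∈ T then n else q) else b i) := by
        funext i
        rcases eq_or_ne i a with rfl | hia
        · simp [ha, haT]
        · simp [Function.update_of_ne hia, Finset.mem_insert, hia]
      rw [hfun, Finset.card_insert_of_notMem ha,
        show S.card + 1 - T.card = (S.card - T.card) + 1 by omega, pow_succ]
      ring
    · -- β branch matches the insert a T terms
      apply Finset.sum_congr rfl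
      intro T hT
      rw [Finset.mem_powerset] at hT
      have hTS : T.card ≤ S.card := Finset.card_le_card hT
      have haT : a ∉ T := fun h => ha (hT h)
      have hfun : (fun i => if i ∈ S then (if i ∈ T then n else q)
            else (Function.update b a n) i)
          = (fun i => if i ∈ insert a S then (if i ∈ insert a T then n else q) else b i) := by
        funext i
        rcases eq_or_ne i a with rfl | hia
        · simp [ha]
        · simp [Function.update_of_ne hia, Finset.mem_insert, hia]
      rw [hfun, Finset.card_insert_of_notMem ha, Finset.card_insert_of_notMem haT,
        show S.card + 1 - (T.card + 1) = S.card - T.card by omega, pow_succ]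
      ring

lemma binom_sum {F : Type*} [CommRing F] (r : ℕ) (y : F) :
    ∑ j ∈ Finset.range (r + 1), (r.choose j : F) * (-1) ^ j * y ^ j = (1 - y) ^ r := by
  rw [show (1 - y : F) = -y + 1 by ring, add_pow]
  apply Finset.sum_congr rfl
  intro j hj
  rw [neg_pow]
  ring


/-- In `F[[T]]`:
`Σ_{p≥0} E_p L^{mp} T^p = Σ_{p=1}^{n} Σ_{s ∈ {0,1}^m} L^{mp} T^p E_{p,s} (L^{-n}-1)^{-|s|}
  Σ_{j=0}^{|s|} C(|s|,j) (-1)^j (1 - L^{jn} T^n)^{-1}`. -/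
theorem EsumZ_powerSeries_identity
    {F : Type*} [Field F] (n m : ℕ) (hn : 1 ≤ n) (hm : 1 ≤ m)
    (L : F) (hL0 : L ≠ 0) (hLn : L ^ n ≠ 1)
    (K : Set (Fin m → ℤ))
    (hK : ∀ (l : Fin m → ℤ) (j : Fin m), l ∈ K ↔ l + (n : ℤ) • Pi.single j 1 ∈ K) :
    (PowerSeries.mk (fun p => EsumZ m K L (fun _ => p) * L ^ (m * p)) : PowerSeries F) =
      ∑ p ∈ Finset.Icc 1 n, ∑ s : Fin m → Bool,
        (PowerSeries.C
            (L ^ (m * p) * EsumZ m K L (fun i => if s i then n else p) *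
              (L ^ (-(n : ℤ)) - 1)⁻¹ ^ (Finset.univ.filter fun i => s i = true).card)) *
          (PowerSeries.X : PowerSeries F) ^ p *
          ∑ j ∈ Finset.range ((Finset.univ.filter fun i => s i = true).card + 1),
            PowerSeries.C
                (((Finset.univ.filter fun i => s i = true).card.choose j : F) * (-1) ^ j) *
              (1 - PowerSeries.C (L ^ (j * n)) * (PowerSeries.X : PowerSeries F) ^ n)⁻¹ := by
  classical
  have hx1 : L ^ (-(n : ℤ)) - 1 ≠ 0 := by
    rw [sub_ne_zero]
    intro h
    apply hLn
    rw [zpow_neg, zpow_natCast] at h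
    exact inv_eq_one.mp h
  ext N
  rw [PowerSeries.coeff_mk, map_sum]
  have hterm : ∀ (p : ℕ) (s : Fin m → Bool),
      (PowerSeries.coeff N) ((PowerSeries.C
            (L ^ (m * p) * EsumZ m K L (fun i => if s i then n else p) *
              (L ^ (-(n : ℤ)) - 1)⁻¹ ^ (Finset.univ.filter fun i => s i = true).card)) *
          (PowerSeries.X : PowerSeries F) ^ p *
          ∑ j ∈ Finset.range ((Finset.univ.filter fun i => s i = true).card + 1),
            PowerSeries.C
                (((Finset.univ.filter fun i => s i = true).card.choose j : F) * (-1) ^ j) *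
              (1 - PowerSeries.C (L ^ (j * n)) * (PowerSeries.X : PowerSeries F) ^ n)⁻¹)
        = if p ≤ N ∧ n ∣ (N - p) then
            L ^ (m * p) * EsumZ m K L (fun i => if s i then n else p) *
              (L ^ (-(n : ℤ)) - 1)⁻¹ ^ (Finset.univ.filter fun i => s i = true).card *
              (1 - L ^ (n * ((N - p) / n))) ^ (Finset.univ.filter fun i => s i = true).card
          else 0 := by
    intro p s
    set r := (Finset.univ.filter fun i => s i = true).card with hr
    set c := L ^ (m * p) * EsumZ m K L (fun i => if s i then n else p) *
      (L ^ (-(n : ℤ)) - 1)⁻¹ ^ r with hc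
    rw [show ∀ Φ : PowerSeries F, PowerSeries.C c * X ^ p * Φ
        = PowerSeries.C c * (Φ * X ^ p) from fun Φ => by ring,
      PowerSeries.coeff_C_mul, PowerSeries.coeff_mul_X_pow']
    by_cases hpN : p ≤ N
    · rw [if_pos hpN]
      simp only [geom_inv n hn, map_sum, PowerSeries.coeff_C_mul, PowerSeries.coeff_mk]
      by_cases hd : n ∣ N - p
      · rw [if_pos ⟨hpN, hd⟩]
        have hexp : ∀ j : ℕ, (if n ∣ N - p then (L ^ (j * n)) ^ ((N - p) / n) else 0)
            = (L ^ (n * ((N - p) / n))) ^ j := by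
          intro j
          rw [if_pos hd, ← pow_mul, ← pow_mul]
          ring_nf
        simp only [hexp]
        rw [binom_sum r (L ^ (n * ((N - p) / n)))]
      · rw [if_neg (fun h => hd h.2)]
        simp only [if_neg hd, mul_zero, Finset.sum_const_zero]
    · rw [if_neg hpN, if_neg (fun h => hpN h.1), mul_zero]
  simp only [map_sum]
  rw [Finset.sum_congr rfl (fun p _ => Finset.sum_congr rfl (fun s _ => hterm p s))]
  rcases Nat.eq_zero_or_pos N with rfl | hN
  · have hE0 : EsumZ m K L (fun _ => (0 : ℕ)) = 0 := by
      simp only [EsumZ]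
      have hicc : Finset.Icc (1 : Fin m → ℤ) (fun _ => ((0 : ℕ) : ℤ)) = ∅ := by
        apply Finset.Icc_eq_empty
        intro hle
        have := hle ⟨0, hm⟩
        simp at this
      rw [hicc, Finset.filter_empty, Finset.sum_empty]
    rw [hE0, zero_mul]
    symm
    apply Finset.sum_eq_zero
    intro p hp
    apply Finset.sum_eq_zero
    intro s _
    rw [Finset.mem_Icc] at hp
    rw [if_neg]
    rintro ⟨h1, -⟩
    omega
  · set p₀ := (N - 1) % n + 1 with hp₀def
    set k := (N - 1) / n with hkdef
    have hmod := Nat.mod_add_div (N - 1) n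
    have hNk : N = p₀ + n * k := by rw [hp₀def, hkdef]; omega
    have hp₀1 : 1 ≤ p₀ := by omega
    have hp₀n : p₀ ≤ n := by
      have := Nat.mod_lt (N - 1) (show 0 < n by omega)
      omega
    have hNk' : N = p₀ + k * n := by rw [hNk, Nat.mul_comm]
    have hNp₀ : N - p₀ = n * k := by omega
    have hdiv : (N - p₀) / n = k := by
      rw [hNp₀, Nat.mul_div_cancel_left _ (show 0 < n by omega)]
    rw [Finset.sum_eq_single p₀]
    rotate_left
    · intro p hp hne
      apply Finset.sum_eq_zero
      intro s _
      rw [Finset.mem_Icc] at hp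
      rw [if_neg]
      rintro ⟨hpN, t, ht⟩
      apply hne
      have h1 : N - 1 = (p - 1) + n * t := by omega
      have h2 : (N - 1) % n = p - 1 := by
        rw [h1, Nat.add_mul_mod_self_left, Nat.mod_eq_of_lt (by omega)]
      omega
    · intro h
      exact absurd (Finset.mem_Icc.mpr ⟨hp₀1, hp₀n⟩) h
    rw [Finset.sum_congr rfl (fun s _ => if_pos ⟨by omega, ⟨k, hNp₀⟩⟩)]
    simp only [hdiv]
    -- scalar identity
    have key : ∀ t : ℕ, t ≤ m →
        (∑ i ∈ Finset.range k, (L ^ (-(n : ℤ))) ^ i) ^ t * ((L ^ (-(n : ℤ))) ^ k) ^ (m - t) *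
            L ^ (m * N)
          = L ^ (m * p₀) * ((L ^ (-(n : ℤ)) - 1)⁻¹ ^ t * (1 - L ^ (n * k)) ^ t) := by
      intro t ht
      have hxky : (L ^ (-(n : ℤ))) ^ k * L ^ (n * k) = 1 := by
        rw [← zpow_natCast (L ^ (-(n : ℤ))) k, ← zpow_mul, ← zpow_natCast L (n * k),
          ← zpow_add₀ hL0, show -(n : ℤ) * (k : ℤ) + ((n * k : ℕ) : ℤ) = 0 by push_cast; ring,
          zpow_zero]
      have hβy : (∑ i ∈ Finset.range k, (L ^ (-(n : ℤ))) ^ i) * L ^ (n * k)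
          = (1 - L ^ (n * k)) * (L ^ (-(n : ℤ)) - 1)⁻¹ := by
        rw [eq_mul_inv_iff_mul_eq₀ hx1]
        have hg := geom_sum_mul (L ^ (-(n : ℤ))) k
        linear_combination L ^ (n * k) * hg + hxky
      have e1 : L ^ (m * N) = L ^ (m * p₀) * ((L ^ (n * k)) ^ t * (L ^ (n * k)) ^ (m - t)) := by
        have hmn : m * N = m * p₀ + n * k * m := by rw [hNk]; ring
        rw [hmn, pow_add]
        congr 1
        rw [← pow_add, show t + (m - t) = m by omega, ← pow_mul]
      rw [e1, show (∑ i ∈ Finset.range k, (L ^ (-(n : ℤ))) ^ i) ^ t *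
            ((L ^ (-(n : ℤ))) ^ k) ^ (m - t) *
            (L ^ (m * p₀) * ((L ^ (n * k)) ^ t * (L ^ (n * k)) ^ (m - t)))
          = ((∑ i ∈ Finset.range k, (L ^ (-(n : ℤ))) ^ i) * L ^ (n * k)) ^ t *
            ((L ^ (-(n : ℤ))) ^ k * L ^ (n * k)) ^ (m - t) * L ^ (m * p₀) by
            rw [mul_pow, mul_pow]; ring,
        hxky, hβy, one_pow, mul_pow]
      ring
    -- LHS via multi lemma
    have hfun0 : (fun _ : Fin m => N)
        = (fun i => if i ∈ (Finset.univ : Finset (Fin m)) then p₀ + k * n else (fun _ => 0) i) := by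
      funext i
      simp only [Finset.mem_univ, if_true]
      exact hNk'
    rw [hfun0, EsumZ_multi n m hn L hL0 K hK p₀ k Finset.univ (fun _ => 0), Finset.sum_mul]
    refine Finset.sum_nbij' (fun T => fun i => decide (i ∈ T))
      (fun s => Finset.univ.filter (fun i => s i = true)) ?_ ?_ ?_ ?_ ?_
    · intro T _
      exact Finset.mem_univ _
    · intro s _
      exact Finset.mem_powerset.mpr (Finset.filter_subset _ _)
    · intro T _
      ext i
      simp
    · intro s _
      funext i
      simp
    · intro T hT
      have htm : T.card ≤ m := by
        have := Finset.card_le_card (Finset.mem_powerset.mp hT)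
        simpa using this
    -- r for the mapped s equals T.card
      have hrT : (Finset.univ.filter fun i => (decide (i ∈ T) : Bool) = true).card = T.card := by
        congr 1
        ext i
        simp
      have hEfun : (fun i => if i ∈ (Finset.univ : Finset (Fin m)) then (if i ∈ T then n else p₀)
            else (fun _ => 0) i)
          = (fun i => if (decide (i ∈ T) : Bool) = true then n else p₀) := by
        funext i
        simp
      rw [hEfun, hrT, Finset.card_univ, Fintype.card_fin]
      rw [show ∀ a b c d : F, a * b * c * d = a * b * d * c from fun a b c d => by ring]
      rw [key T.card htm]
      ring
end

section
/- In the formal power series ring F[[T]] one has the identity Σ_{p≥0} F_p·L^{mp}·T^p = (Σ_{l ∈ K, 1 ≤ l_i ≤ n ∀i} L^{−(l_1+⋯+l_m)}·(L^m·T)^{b(l)}) · (1 − L^m·T)^{−1} · Π_{i=1}^m (1 − L^{n(m·a_i − 1)}·T^{n·a_i})^{−1}, where the inverses exist in F[[T]] because the corresponding power series have constant term 1 (note n·a_i is a positive integer and b(l) is a nonnegative integer for l ∈ K with all l_i ≥ 1). -/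
open PowerSeries

/-- `F_p = Σ L^{-(l_1+⋯+l_m)}`, summed over `l ∈ K` with `l_i ≥ 1` for all `i` and
`b(l) = Σ_i a_i l_i ≤ p` (since `a_i ≥ 1`, such `l` satisfy `l_i ≤ p`, so the sum
ranges over a finite box). -/
noncomputable def Fsum {F : Type*} [Field F] (m : ℕ) (K : Set (Fin m → ℤ))
    (a : Fin m → ℚ) (L : F) (p : ℕ) : F :=
  letI := Classical.decPred fun l : Fin m → ℤ =>
    l ∈ K ∧ (∑ i, a i * (l i : ℚ)) ≤ (p : ℚ)
  ∑ l ∈ (Finset.Icc (1 : Fin m → ℤ) (fun _ => (p : ℤ))).filter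
      (fun l => l ∈ K ∧ (∑ i, a i * (l i : ℚ)) ≤ (p : ℚ)),
    L ^ (-(∑ i, l i))

section Aux
variable {F : Type*} [Field F] (n m : ℕ) (K : Set (Fin m → ℤ)) (a : Fin m → ℚ) (L : F)

open Classical in
noncomputable def hset (S : Finset (Fin m)) (p : ℕ) : Finset (Fin m → ℤ) :=
  (Finset.Icc (1 : Fin m → ℤ) (fun _ => (p : ℤ))).filter
    (fun l => l ∈ K ∧ (∀ j ∈ S, l j ≤ (n : ℤ)) ∧ (∑ i, a i * (l i : ℚ)) = (p : ℚ))

noncomputable def Hs (S : Finset (Fin m)) (p : ℕ) : F :=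
  ∑ l ∈ hset n m K a S p, L ^ (-(∑ i, l i))

variable {n m K a}

lemma term_pos (ha1 : ∀ i, 1 ≤ a i) {l : Fin m → ℤ} (hl : 1 ≤ l) (i : Fin m) :
    (l i : ℚ) ≤ a i * (l i : ℚ) ∧ (0 : ℚ) < a i * (l i : ℚ) := by
  have h1 : (1 : ℤ) ≤ l i := hl i
  have h1' : (1 : ℚ) ≤ (l i : ℚ) := by exact_mod_cast h1
  exact ⟨by nlinarith [ha1 i], by nlinarith [ha1 i]⟩

lemma le_of_b_le (ha1 : ∀ i, 1 ≤ a i) {l : Fin m → ℤ} (hl : 1 ≤ l) {q : ℚ}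
    (hle : (∑ i, a i * (l i : ℚ)) ≤ q) (j : Fin m) : (l j : ℚ) ≤ q := by
  have hsingle : a j * (l j : ℚ) ≤ ∑ i, a i * (l i : ℚ) :=
    Finset.single_le_sum (fun i _ => (term_pos ha1 hl i).2.le) (Finset.mem_univ j)
  have := (term_pos ha1 hl j).1
  linarith

lemma mem_hset (ha1 : ∀ i, 1 ≤ a i) {S : Finset (Fin m)} {p : ℕ} {l : Fin m → ℤ} :
    l ∈ hset n m K a S p ↔
      1 ≤ l ∧ l ∈ K ∧ (∀ j ∈ S, l j ≤ (n : ℤ)) ∧ (∑ i, a i * (l i : ℚ)) = (p : ℚ) := by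
  classical
  simp only [hset, Finset.mem_filter, Finset.mem_Icc]
  constructor
  · rintro ⟨⟨h1, _⟩, h⟩; exact ⟨h1, h⟩
  · rintro ⟨h1, hK', hS, hbp⟩
    refine ⟨⟨h1, fun j => ?_⟩, hK', hS, hbp⟩
    exact_mod_cast le_of_b_le ha1 h1 hbp.le j

lemma Fsum_succ (ha1 : ∀ i, 1 ≤ a i)
    (hb : ∀ l ∈ K, ∃ z : ℤ, (∑ i, a i * (l i : ℚ)) = (z : ℚ)) (p : ℕ) :
    Fsum m K a L (p + 1) = Fsum m K a L p + Hs n m K a L ∅ (p + 1) := by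
  classical
  simp only [Fsum, Hs]
  rw [← Finset.sum_filter_add_sum_filter_not (p := fun l : Fin m → ℤ => (∑ i, a i * (l i : ℚ)) ≤ (p : ℚ))]
  congr 1
  · apply Finset.sum_congr _ (fun _ _ => rfl)
    ext l
    simp only [Finset.mem_filter, Finset.mem_Icc]
    constructor
    · rintro ⟨⟨⟨h1, _⟩, hK', _⟩, hle⟩
      exact ⟨⟨h1, fun j => by exact_mod_cast le_of_b_le ha1 h1 hle j⟩, hK', hle⟩
    · rintro ⟨⟨h1, h2⟩, hK', hle⟩
      refine ⟨⟨⟨h1, fun j => le_trans (h2 j) (by push_cast; omega)⟩, hK',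
        le_trans hle (by push_cast; linarith)⟩, hle⟩
  · apply Finset.sum_congr _ (fun _ _ => rfl)
    ext l
    simp only [hset, Finset.mem_filter, Finset.mem_Icc]
    constructor
    · rintro ⟨⟨⟨h1, h2⟩, hK', hle⟩, hgt⟩
      obtain ⟨z, hz⟩ := hb l hK'
      rw [hz] at hle hgt ⊢
      have hz1 : z ≤ (p : ℤ) + 1 := by exact_mod_cast hle
      have hz2 : (p : ℤ) < z := by
        by_contra h
        exact hgt (by exact_mod_cast not_lt.mp h)
      have hzp : z = (p : ℤ) + 1 := by omega
      refine ⟨⟨h1, h2⟩, hK', fun j hj => absurd hj (Finset.notMem_empty j), ?_⟩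
      rw [hzp]; push_cast; ring
    · rintro ⟨⟨h1, h2⟩, hK', _, heq⟩
      refine ⟨⟨⟨h1, h2⟩, hK', heq.le⟩, ?_⟩
      rw [heq]; push_cast; intro h; linarith

lemma smul_single_apply (j i : Fin m) :
    ((n : ℤ) • (Pi.single j 1 : Fin m → ℤ)) i = if i = j then (n : ℤ) else 0 := by
  simp [Pi.single_apply]

lemma shift_sum (l : Fin m → ℤ) (j : Fin m) :
    ∑ i, (l - (n : ℤ) • (Pi.single j 1 : Fin m → ℤ)) i = (∑ i, l i) - n := by
  have h : ∀ i : Fin m, (l - (n : ℤ) • (Pi.single j 1 : Fin m → ℤ)) i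
      = l i - (if i = j then (n : ℤ) else 0) := fun i => by
    rw [Pi.sub_apply, smul_single_apply]
  rw [Finset.sum_congr rfl fun i _ => h i, Finset.sum_sub_distrib]
  simp

lemma shift_b (l : Fin m → ℤ) (j : Fin m) :
    ∑ i, a i * (((l - (n : ℤ) • (Pi.single j 1 : Fin m → ℤ)) i : ℤ) : ℚ)
      = (∑ i, a i * ((l i : ℤ) : ℚ)) - n * a j := by
  have h : ∀ i : Fin m, a i * (((l - (n : ℤ) • (Pi.single j 1 : Fin m → ℤ)) i : ℤ) : ℚ)
      = a i * ((l i : ℤ) : ℚ) - (if i = j then (n : ℚ) * a j else 0) := by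
    intro i
    rw [Pi.sub_apply, smul_single_apply]
    by_cases h : i = j
    · subst h; rw [if_pos rfl, if_pos rfl]; push_cast; ring
    · rw [if_neg h, if_neg h]; push_cast; ring
  rw [Finset.sum_congr rfl fun i _ => h i, Finset.sum_sub_distrib]
  simp

lemma unshift_b (l : Fin m → ℤ) (j : Fin m) :
    ∑ i, a i * (((l + (n : ℤ) • (Pi.single j 1 : Fin m → ℤ)) i : ℤ) : ℚ)
      = (∑ i, a i * ((l i : ℤ) : ℚ)) + n * a j := by
  have h : ∀ i : Fin m, a i * (((l + (n : ℤ) • (Pi.single j 1 : Fin m → ℤ)) i : ℤ) : ℚ)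
      = a i * ((l i : ℤ) : ℚ) + (if i = j then (n : ℚ) * a j else 0) := by
    intro i
    rw [Pi.add_apply, smul_single_apply]
    by_cases h : i = j
    · subst h; rw [if_pos rfl, if_pos rfl]; push_cast; ring
    · rw [if_neg h, if_neg h]; push_cast; ring
  rw [Finset.sum_congr rfl fun i _ => h i, Finset.sum_add_distrib]
  simp

lemma Hs_peel {na : Fin m → ℕ} (ha1 : ∀ i, 1 ≤ a i)
    (hna : ∀ i, (na i : ℚ) = (n : ℚ) * a i)
    (hK : ∀ (l : Fin m → ℤ) (j : Fin m), l ∈ K ↔ l + (n : ℤ) • Pi.single j 1 ∈ K)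
    (hL0 : L ≠ 0) {S : Finset (Fin m)} {j : Fin m} (hj : j ∉ S) (p : ℕ) :
    Hs n m K a L S p = Hs n m K a L (insert j S) p
      + if na j ≤ p then L ^ (-(n : ℤ)) * Hs n m K a L S (p - na j) else 0 := by
  classical
  rw [Hs, ← Finset.sum_filter_add_sum_filter_not (hset n m K a S p)
    (fun l => l j ≤ (n : ℤ))]
  congr 1
  · apply Finset.sum_congr _ (fun _ _ => rfl)
    ext l
    simp only [Finset.mem_filter, mem_hset ha1, Finset.mem_insert]
    constructor
    · rintro ⟨⟨h1, hK', hS, hbp⟩, hjn⟩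
      exact ⟨h1, hK', fun i hi => hi.elim (fun h => h ▸ hjn) (hS i), hbp⟩
    · rintro ⟨h1, hK', hS, hbp⟩
      exact ⟨⟨h1, hK', fun i hi => hS i (Or.inr hi), hbp⟩, hS j (Or.inl rfl)⟩
  · by_cases hc : na j ≤ p
    · rw [if_pos hc, Hs, Finset.mul_sum]
      refine Finset.sum_bij'
        (fun l _ => l - (n : ℤ) • (Pi.single j 1 : Fin m → ℤ))
        (fun l _ => l + (n : ℤ) • (Pi.single j 1 : Fin m → ℤ)) ?_ ?_ ?_ ?_ ?_
      · rintro l hl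
        rw [Finset.mem_filter, mem_hset ha1] at hl
        obtain ⟨⟨h1, hK', hS, hbp⟩, hjn⟩ := hl
        rw [mem_hset ha1]
        have hjn' : (n : ℤ) + 1 ≤ l j := by omega
        refine ⟨?_, ?_, ?_, ?_⟩
        · intro i
          rw [Pi.sub_apply, smul_single_apply]
          by_cases h : i = j
          · subst h; rw [if_pos rfl]; have := h1 i; simp only [Pi.one_apply] at this ⊢; omega
          · rw [if_neg h, sub_zero]; exact h1 i
        · have hc2 := (hK (l - (n : ℤ) • (Pi.single j 1 : Fin m → ℤ)) j).2
          have hadd : l - (n : ℤ) • (Pi.single j 1 : Fin m → ℤ)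
              + (n : ℤ) • (Pi.single j 1 : Fin m → ℤ) = l := by abel
          rw [hadd] at hc2
          exact hc2 hK'
        · intro i hi
          have hij : i ≠ j := fun h => hj (h ▸ hi)
          rw [Pi.sub_apply, smul_single_apply, if_neg hij, sub_zero]
          exact hS i hi
        · rw [shift_b, hbp, ← hna j]
          push_cast [hc]
          ring
      · rintro l hl
        rw [mem_hset ha1] at hl
        obtain ⟨h1, hK', hS, hbp⟩ := hl
        rw [Finset.mem_filter, mem_hset ha1]
        refine ⟨⟨?_, ?_, ?_, ?_⟩, ?_⟩
        · intro i
          rw [Pi.add_apply, smul_single_apply]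
          have := h1 i
          simp only [Pi.one_apply] at this ⊢
          split_ifs <;> omega
        · exact (hK l j).1 hK'
        · intro i hi
          have hij : i ≠ j := fun h => hj (h ▸ hi)
          rw [Pi.add_apply, smul_single_apply, if_neg hij, add_zero]
          exact hS i hi
        · rw [unshift_b, hbp, ← hna j]
          push_cast [hc]
          ring
        · rw [Pi.add_apply, smul_single_apply, if_pos rfl]
          have := h1 j
          simp only [Pi.one_apply] at this
          omega
      · intro l _
        abel
      · intro l _
        abel
      · intro l hl
        rw [shift_sum]
        rw [show (-(n : ℤ) : ℤ) = -(n : ℤ) from rfl]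
        rw [show L ^ (-(n : ℤ)) * L ^ (-((∑ i, l i) - (n : ℤ)))
            = L ^ (-(n : ℤ) + -((∑ i, l i) - (n : ℤ))) from (zpow_add₀ hL0 _ _).symm]
        congr 1
        ring
    · rw [if_neg hc]
      have hempty : (hset n m K a S p).filter (fun l => ¬ l j ≤ (n : ℤ)) = ∅ := by
        refine Finset.eq_empty_of_forall_notMem fun l hl => ?_
        rw [Finset.mem_filter, mem_hset ha1] at hl
        obtain ⟨⟨h1, hK', hS, hbp⟩, hjn⟩ := hl
        have hjn' : ((n : ℚ) + 1) ≤ (l j : ℚ) := by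
          exact_mod_cast (by omega : (n : ℤ) + 1 ≤ l j)
        have hsingle : a j * (l j : ℚ) ≤ ∑ i, a i * (l i : ℚ) :=
          Finset.single_le_sum (fun i _ => (term_pos ha1 h1 i).2.le) (Finset.mem_univ j)
        have hpna : (p : ℚ) < (na j : ℚ) := by exact_mod_cast Nat.lt_of_not_le hc
        rw [hna j] at hpna
        have haj := ha1 j
        nlinarith [mul_le_mul_of_nonneg_left hjn' (by linarith : (0:ℚ) ≤ a j), hbp]
      rw [hempty, Finset.sum_empty]

lemma n_le_na {na : Fin m → ℕ} (ha1 : ∀ i, 1 ≤ a i)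
    (hna : ∀ i, (na i : ℚ) = (n : ℚ) * a i) (j : Fin m) : n ≤ na j := by
  have h1 : (n : ℚ) ≤ (na j : ℚ) := by
    rw [hna j]
    nlinarith [ha1 j, Nat.cast_nonneg (α := ℚ) n]
  exact_mod_cast h1

lemma mk_mul_peel {na : Fin m → ℕ} (hm : 1 ≤ m) (ha1 : ∀ i, 1 ≤ a i)
    (hna : ∀ i, (na i : ℚ) = (n : ℚ) * a i)
    (hK : ∀ (l : Fin m → ℤ) (j : Fin m), l ∈ K ↔ l + (n : ℤ) • Pi.single j 1 ∈ K)
    (hL0 : L ≠ 0) {S : Finset (Fin m)} {j : Fin m} (hj : j ∉ S) :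
    (PowerSeries.mk (fun p => Hs n m K a L S p * L ^ (m * p)) : PowerSeries F) *
      (1 - PowerSeries.C (L ^ (m * na j - n)) * X ^ (na j)) =
    PowerSeries.mk (fun p => Hs n m K a L (insert j S) p * L ^ (m * p)) := by
  have hnaj : n ≤ na j := n_le_na ha1 hna j
  ext p
  rw [mul_sub, mul_one, map_sub, coeff_mk]
  have hre : (PowerSeries.mk (fun p => Hs n m K a L S p * L ^ (m * p)) : PowerSeries F) *
      (PowerSeries.C (L ^ (m * na j - n)) * X ^ (na j))
      = PowerSeries.C (L ^ (m * na j - n)) *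
        ((PowerSeries.mk (fun p => Hs n m K a L S p * L ^ (m * p))) * X ^ (na j)) := by
    ring
  rw [hre, coeff_C_mul, coeff_mul_X_pow']
  simp only [coeff_mk]
  rw [Hs_peel L ha1 hna hK hL0 hj p]
  split_ifs with h
  · 
    have e1 : L ^ (m * na j - n) * L ^ (m * (p - na j)) = L ^ (m * p - n) := by
      rw [← pow_add]
      congr 1
      have h1 : n ≤ m * na j := le_trans hnaj (Nat.le_mul_of_pos_left (na j) hm)
      have h3 : n ≤ m * p := le_trans (le_trans hnaj h) (Nat.le_mul_of_pos_left p hm)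
      zify [h1, h, h3]
      ring
    have e2 : L ^ (-(n : ℤ)) * L ^ (m * p) = L ^ (m * p - n) := by
      have hsplit : L ^ (m * p) = L ^ (m * p - n) * L ^ n := by
        rw [← pow_add]
        congr 1
        have h3 : n ≤ m * p := le_trans (le_trans hnaj h) (Nat.le_mul_of_pos_left p hm)
        omega
      rw [hsplit, zpow_neg, zpow_natCast, mul_comm, mul_assoc,
        mul_inv_cancel₀ (pow_ne_zero n hL0), mul_one]
    linear_combination (Hs n m K a L S (p - na j)) * e2 - (Hs n m K a L S (p - na j)) * e1
  · ring

lemma prod_peel {na : Fin m → ℕ} (hm : 1 ≤ m) (ha1 : ∀ i, 1 ≤ a i)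
    (hna : ∀ i, (na i : ℚ) = (n : ℚ) * a i)
    (hK : ∀ (l : Fin m → ℤ) (j : Fin m), l ∈ K ↔ l + (n : ℤ) • Pi.single j 1 ∈ K)
    (hL0 : L ≠ 0) (T : Finset (Fin m)) :
    ∀ S : Finset (Fin m), Disjoint S T →
    (PowerSeries.mk (fun p => Hs n m K a L S p * L ^ (m * p)) : PowerSeries F) *
      ∏ i ∈ T, (1 - PowerSeries.C (L ^ (m * na i - n)) * X ^ (na i)) =
    PowerSeries.mk (fun p => Hs n m K a L (S ∪ T) p * L ^ (m * p)) := by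
  induction T using Finset.induction_on with
  | empty => intro S _; simp
  | @insert j T hjT ih =>
    intro S hdisj
    have hjS : j ∉ S := fun h =>
      (Finset.disjoint_left.mp hdisj h) (Finset.mem_insert_self j T)
    have hdisj' : Disjoint (insert j S) T := by
      rw [Finset.disjoint_left]
      intro x hx hxT
      rcases Finset.mem_insert.mp hx with h | h
      · exact hjT (h ▸ hxT)
      · exact (Finset.disjoint_left.mp hdisj h) (Finset.mem_insert_of_mem hxT)
    rw [Finset.prod_insert hjT, ← mul_assoc, mk_mul_peel L hm ha1 hna hK hL0 hjS,
      ih (insert j S) hdisj', Finset.insert_union, Finset.union_insert]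

lemma first_mul (hm : 1 ≤ m) (ha1 : ∀ i, 1 ≤ a i)
    (hb : ∀ l ∈ K, ∃ z : ℤ, (∑ i, a i * (l i : ℚ)) = (z : ℚ)) :
    (PowerSeries.mk (fun p => Fsum m K a L p * L ^ (m * p)) : PowerSeries F) *
      (1 - PowerSeries.C (L ^ m) * X) =
    PowerSeries.mk (fun p => Hs n m K a L ∅ p * L ^ (m * p)) := by
  classical
  have hIcc : (Finset.Icc (1 : Fin m → ℤ) (fun _ => ((0 : ℕ) : ℤ))) = ∅ := by
    apply Finset.Icc_eq_empty
    intro hle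
    have := hle ⟨0, hm⟩
    simp at this
  ext p
  rw [mul_sub, mul_one, map_sub, coeff_mk]
  have hre : (PowerSeries.mk (fun p => Fsum m K a L p * L ^ (m * p)) : PowerSeries F) *
      (PowerSeries.C (L ^ m) * X)
      = PowerSeries.C (L ^ m) *
        ((PowerSeries.mk (fun p => Fsum m K a L p * L ^ (m * p))) * X ^ 1) := by
    rw [pow_one]; ring
  rw [hre, coeff_C_mul, coeff_mul_X_pow']
  simp only [coeff_mk]
  cases p with
  | zero =>
    rw [if_neg (by omega)]
    have h1 : Fsum m K a L 0 = 0 := by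
      rw [Fsum]
      rw [show ((0 : ℕ) : ℤ) = ((0 : ℕ) : ℤ) from rfl]
      rw [Finset.filter_congr_decidable]
      rw [hIcc]
      simp
    have h2 : Hs n m K a L ∅ 0 = 0 := by
      rw [Hs, hset, hIcc]
      simp
    rw [h1, h2]
    ring
  | succ q =>
    rw [if_pos (by omega), Nat.add_sub_cancel, Fsum_succ L ha1 hb q]
    have hpow : L ^ m * L ^ (m * q) = L ^ (m * (q + 1)) := by
      rw [← pow_add]
      congr 1
      ring
    linear_combination (Fsum m K a L q) * hpow

open Classical in
lemma final_sum (hm : 1 ≤ m) (ha1 : ∀ i, 1 ≤ a i)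
    (hb : ∀ l ∈ K, ∃ z : ℤ, (∑ i, a i * (l i : ℚ)) = (z : ℚ)) :
    (PowerSeries.mk (fun p => Hs n m K a L Finset.univ p * L ^ (m * p)) : PowerSeries F) =
      ∑ l ∈ (Finset.Icc (1 : Fin m → ℤ) (fun _ => (n : ℤ))).filter (· ∈ K),
        PowerSeries.C (L ^ (-(∑ i, l i))) *
          (PowerSeries.C (L ^ m) * (PowerSeries.X : PowerSeries F))
            ^ ⌊∑ i, a i * (l i : ℚ)⌋₊ := by
  ext p
  rw [coeff_mk, map_sum]
  have hterm : ∀ l ∈ (Finset.Icc (1 : Fin m → ℤ) (fun _ => (n : ℤ))).filter (· ∈ K),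
      (coeff p) (PowerSeries.C (L ^ (-(∑ i, l i))) *
          (PowerSeries.C (L ^ m) * (PowerSeries.X : PowerSeries F))
            ^ ⌊∑ i, a i * (l i : ℚ)⌋₊)
      = if p = ⌊∑ i, a i * (l i : ℚ)⌋₊ then L ^ (-(∑ i, l i)) * (L ^ m) ^ p else 0 := by
    intro l _
    rw [mul_pow, ← map_pow, ← mul_assoc, ← map_mul, coeff_C_mul, coeff_X_pow]
    by_cases h : p = ⌊∑ i, a i * (l i : ℚ)⌋₊
    · rw [if_pos h, if_pos h, mul_one, h]
    · rw [if_neg h, if_neg h, mul_zero]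
  rw [Finset.sum_congr rfl hterm, ← Finset.sum_filter]
  rw [Hs, Finset.sum_mul, pow_mul]
  apply Finset.sum_congr _ (fun _ _ => rfl)
  ext l
  rw [Finset.mem_filter, Finset.mem_filter, Finset.mem_Icc, mem_hset ha1]
  constructor
  · rintro ⟨h1, hK', hS, hbp⟩
    refine ⟨⟨⟨h1, fun i => hS i (Finset.mem_univ i)⟩, hK'⟩, ?_⟩
    rw [hbp, Nat.floor_natCast]
  · rintro ⟨⟨⟨h1, h2⟩, hK'⟩, hfl⟩
    obtain ⟨z, hz⟩ := hb l hK'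
    have hz0 : (0 : ℚ) ≤ (z : ℚ) := by
      rw [← hz]
      exact Finset.sum_nonneg fun i _ => (term_pos ha1 h1 i).2.le
    have hz0' : (0 : ℤ) ≤ z := by exact_mod_cast hz0
    have hcast : ((z.toNat : ℕ) : ℚ) = (z : ℚ) := by
      exact_mod_cast Int.toNat_of_nonneg hz0'
    have hfloor : ⌊∑ i, a i * (l i : ℚ)⌋₊ = z.toNat := by
      rw [hz, ← hcast, Nat.floor_natCast]
    rw [hfloor] at hfl
    refine ⟨h1, hK', fun i _ => h2 i, ?_⟩
    rw [hz, ← hcast, hfl]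

end Aux


/-- In `F[[T]]`:
`Σ_{p≥0} F_p L^{mp} T^p
  = (Σ_{l ∈ K, 1 ≤ l_i ≤ n} L^{-(l_1+⋯+l_m)} (L^m T)^{b(l)}) (1 - L^m T)^{-1}
    Π_{i=1}^m (1 - L^{n(m a_i - 1)} T^{n a_i})^{-1}`. -/
theorem Fsum_powerSeries_identity
    {F : Type*} [Field F] (n m : ℕ) (hn : 1 ≤ n) (hm : 1 ≤ m)
    (L : F) (hL0 : L ≠ 0)
    (a : Fin m → ℚ) (ha1 : ∀ i, 1 ≤ a i)
    (na : Fin m → ℕ) (hna : ∀ i, (na i : ℚ) = (n : ℚ) * a i)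
    (K : Set (Fin m → ℤ))
    (hK : ∀ (l : Fin m → ℤ) (j : Fin m), l ∈ K ↔ l + (n : ℤ) • Pi.single j 1 ∈ K)
    (hb : ∀ l ∈ K, ∃ z : ℤ, (∑ i, a i * (l i : ℚ)) = (z : ℚ)) :
    (PowerSeries.mk (fun p => Fsum m K a L p * L ^ (m * p)) : PowerSeries F) =
      (letI := Classical.decPred (· ∈ K)
        ∑ l ∈ (Finset.Icc (1 : Fin m → ℤ) (fun _ => (n : ℤ))).filter (· ∈ K),
          PowerSeries.C (L ^ (-(∑ i, l i))) *
            (PowerSeries.C (L ^ m) * (PowerSeries.X : PowerSeries F))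
              ^ ⌊∑ i, a i * (l i : ℚ)⌋₊) *
        (1 - PowerSeries.C (L ^ m) * (PowerSeries.X : PowerSeries F))⁻¹ *
        ∏ i, (1 - PowerSeries.C (L ^ (m * na i - n)) *
          (PowerSeries.X : PowerSeries F) ^ (na i))⁻¹ := by
  classical
  have key : (PowerSeries.mk (fun p => Fsum m K a L p * L ^ (m * p)) : PowerSeries F) *
      (1 - PowerSeries.C (L ^ m) * X) *
      ∏ i, (1 - PowerSeries.C (L ^ (m * na i - n)) * X ^ (na i)) =
      ∑ l ∈ (Finset.Icc (1 : Fin m → ℤ) (fun _ => (n : ℤ))).filter (· ∈ K),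
        PowerSeries.C (L ^ (-(∑ i, l i))) *
          (PowerSeries.C (L ^ m) * (PowerSeries.X : PowerSeries F))
            ^ ⌊∑ i, a i * (l i : ℚ)⌋₊ := by
    rw [first_mul L hm ha1 hb,
      prod_peel L hm ha1 hna hK hL0 Finset.univ ∅ (by simp), Finset.empty_union]
    exact final_sum L hm ha1 hb
  have hB : (1 - PowerSeries.C (L ^ m) * (X : PowerSeries F)) *
      (1 - PowerSeries.C (L ^ m) * X)⁻¹ = 1 := by
    apply PowerSeries.mul_inv_cancel
    simp
  have hP : ∀ i : Fin m, (1 - PowerSeries.C (L ^ (m * na i - n)) *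
      (X : PowerSeries F) ^ (na i)) *
      (1 - PowerSeries.C (L ^ (m * na i - n)) * X ^ (na i))⁻¹ = 1 := by
    intro i
    apply PowerSeries.mul_inv_cancel
    have hne : na i ≠ 0 := by
      have := n_le_na ha1 hna i
      omega
    simp [zero_pow hne]
  have main : (PowerSeries.mk (fun p => Fsum m K a L p * L ^ (m * p)) : PowerSeries F) =
      (∑ l ∈ (Finset.Icc (1 : Fin m → ℤ) (fun _ => (n : ℤ))).filter (· ∈ K),
        PowerSeries.C (L ^ (-(∑ i, l i))) *
          (PowerSeries.C (L ^ m) * (PowerSeries.X : PowerSeries F))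
            ^ ⌊∑ i, a i * (l i : ℚ)⌋₊) *
      (1 - PowerSeries.C (L ^ m) * X)⁻¹ *
      ∏ i, (1 - PowerSeries.C (L ^ (m * na i - n)) * X ^ (na i))⁻¹ := by
    rw [← key]
    have hProds : (∏ i, (1 - PowerSeries.C (L ^ (m * na i - n)) *
        (X : PowerSeries F) ^ (na i))) *
        ∏ i, (1 - PowerSeries.C (L ^ (m * na i - n)) * X ^ (na i))⁻¹ = 1 := by
      rw [← Finset.prod_mul_distrib]
      rw [Finset.prod_congr rfl (fun i _ => hP i)]
      simp
    calc (PowerSeries.mk (fun p => Fsum m K a L p * L ^ (m * p)) : PowerSeries F)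
        = (PowerSeries.mk (fun p => Fsum m K a L p * L ^ (m * p)) : PowerSeries F) *
          ((1 - PowerSeries.C (L ^ m) * X) * (1 - PowerSeries.C (L ^ m) * X)⁻¹) *
          ((∏ i, (1 - PowerSeries.C (L ^ (m * na i - n)) * (X : PowerSeries F) ^ (na i))) *
            ∏ i, (1 - PowerSeries.C (L ^ (m * na i - n)) * X ^ (na i))⁻¹) := by
          rw [hB, hProds, mul_one, mul_one]
      _ = _ := by ring
  exact main
end

section
/- The product y_1^{c_1}·⋯·y_m^{c_m} lies in the image of ℂ[[t]] in HahnSeries(ℚ, ℂ) if and only if n divides c_1·l_1 + ⋯ + c_m·l_m (equivalently, Σ_i (c_i/n)·l_i is a nonnegative integer). -/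
private lemma aux_binom {R : Type*} [CommRing R] (n : ℕ) (w u : R) :
    ∃ k, (w + u) ^ (n + 1) = w ^ (n + 1) + ((n + 1 : ℕ) : R) * w ^ n * u + u ^ 2 * k := by
  induction n with
  | zero => exact ⟨0, by push_cast; ring⟩
  | succ n ih =>
    obtain ⟨k, hk⟩ := ih
    refine ⟨((n + 1 : ℕ) : R) * w ^ n + k * (w + u), ?_⟩
    have h1 : (w + u) ^ (n + 1 + 1) = (w + u) ^ (n + 1) * (w + u) := by ring
    rw [h1, hk]
    push_cast
    ring

private noncomputable def rootSeq (n : ℕ) (h : PowerSeries ℂ) (a : ℂ) : ℕ → PowerSeries ℂ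
  | 0 => PowerSeries.C a
  | j + 1 =>
      rootSeq n h a j +
        PowerSeries.C
          ((PowerSeries.coeff (j + 1) h -
              PowerSeries.coeff (j + 1) (rootSeq n h a j ^ (n + 1))) /
            (((n : ℂ) + 1) * a ^ n)) *
          PowerSeries.X ^ (j + 1)

private lemma rootSeq_spec (n : ℕ) (h : PowerSeries ℂ) (a : ℂ) (ha : a ≠ 0)
    (hca : a ^ (n + 1) = PowerSeries.constantCoeff h) (j : ℕ) :
    PowerSeries.X ^ (j + 1) ∣ h - rootSeq n h a j ^ (n + 1) ∧
      PowerSeries.constantCoeff (rootSeq n h a j) = a := by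
  have hne : ((n : ℂ) + 1) * a ^ n ≠ 0 :=
    mul_ne_zero (Nat.cast_add_one_ne_zero n) (pow_ne_zero _ ha)
  induction j with
  | zero =>
    constructor
    · rw [pow_one, PowerSeries.X_dvd_iff]
      simp [rootSeq, ← hca]
    · simp [rootSeq]
  | succ j ih =>
    obtain ⟨⟨r, hr⟩, hconst⟩ := ih
    set w := rootSeq n h a j with hw
    set e : ℂ := (PowerSeries.coeff (j + 1) h -
        PowerSeries.coeff (j + 1) (w ^ (n + 1))) / (((n : ℂ) + 1) * a ^ n) with he
    set u : PowerSeries ℂ := PowerSeries.C e * PowerSeries.X ^ (j + 1) with hu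
    have hseq : rootSeq n h a (j + 1) = w + u := by
      rw [rootSeq]
    obtain ⟨k, hk⟩ := aux_binom n w u
    have hcr : PowerSeries.constantCoeff r =
        PowerSeries.coeff (j + 1) h - PowerSeries.coeff (j + 1) (w ^ (n + 1)) := by
      have h2 := congrArg (PowerSeries.coeff (j + 1)) hr
      rw [map_sub] at h2
      have h3 : PowerSeries.coeff (j + 1) (PowerSeries.X ^ (j + 1) * r) =
          PowerSeries.coeff 0 r := by
        simpa using PowerSeries.coeff_X_pow_mul r (j + 1) 0
      rw [h3] at h2
      rw [← PowerSeries.coeff_zero_eq_constantCoeff_apply]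
      exact h2.symm
    constructor
    · rw [hseq]
      have key : h - (w + u) ^ (n + 1) =
          PowerSeries.X ^ (j + 1) *
            (r - ((n + 1 : ℕ) : PowerSeries ℂ) * w ^ n * PowerSeries.C e) +
          PowerSeries.X ^ (j + 1) * PowerSeries.X ^ (j + 1) *
            (-(PowerSeries.C e) ^ 2 * k) := by
        rw [hk, hu]
        linear_combination hr
      rw [key]
      refine dvd_add ?_ ?_
      · have hstep : (PowerSeries.X : PowerSeries ℂ) ^ (j + 1 + 1) =
            PowerSeries.X ^ (j + 1) * PowerSeries.X := by ring
        rw [hstep]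
        refine mul_dvd_mul_left _ ?_
        rw [PowerSeries.X_dvd_iff]
        have hconst2 : PowerSeries.constantCoeff
            (((n + 1 : ℕ) : PowerSeries ℂ) * w ^ n * PowerSeries.C e) =
            (((n : ℂ) + 1) * a ^ n) * e := by
          push_cast
          simp [map_mul, map_pow, hconst]
        rw [map_sub, hconst2, hcr, he, mul_comm (((n : ℂ) + 1) * a ^ n),
          div_mul_cancel₀ _ hne, sub_self]
      · refine dvd_mul_of_dvd_left ?_ _
        rw [← pow_add]
        exact pow_dvd_pow _ (by omega)
    · rw [hseq, map_add, hconst, hu]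
      simp

private lemma exists_pow_root (n : ℕ) (h : PowerSeries ℂ)
    (hc : PowerSeries.constantCoeff h ≠ 0) : ∃ v : PowerSeries ℂ, v ^ (n + 1) = h := by
  obtain ⟨a, ha⟩ := IsAlgClosed.exists_pow_nat_eq (PowerSeries.constantCoeff h) (n.succ_pos)
  have ha0 : a ≠ 0 := by
    intro h0
    apply hc
    rw [← ha, h0, zero_pow n.succ_ne_zero]
  set v : PowerSeries ℂ := PowerSeries.mk fun i => PowerSeries.coeff i (rootSeq n h a i)
    with hv
  have hstab : ∀ j i, i ≤ j →
      PowerSeries.coeff i (rootSeq n h a j) = PowerSeries.coeff i (rootSeq n h a i) := by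
    intro j
    induction j with
    | zero => intro i hi; rw [Nat.le_zero.mp hi]
    | succ j ih =>
      intro i hi
      by_cases h1 : i = j + 1
      · rw [h1]
      · have hi' : i ≤ j := by omega
        rw [rootSeq, map_add, PowerSeries.coeff_C_mul, PowerSeries.coeff_X_pow,
          if_neg h1, mul_zero, add_zero]
        exact ih i hi'
  have hvc : ∀ j, PowerSeries.X ^ (j + 1) ∣ v - rootSeq n h a j := by
    intro j
    rw [PowerSeries.X_pow_dvd_iff]
    intro i hi
    rw [map_sub, hv, PowerSeries.coeff_mk, hstab j i (by omega), sub_self]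
  refine ⟨v, ?_⟩
  ext j
  have hd1 : PowerSeries.X ^ (j + 1) ∣ v ^ (n + 1) - rootSeq n h a j ^ (n + 1) :=
    dvd_trans (hvc j) (sub_dvd_pow_sub_pow _ _ _)
  have hd2 := (rootSeq_spec n h a ha0 ha j).1
  have hd3 : PowerSeries.X ^ (j + 1) ∣ v ^ (n + 1) - h := by
    have hrw : v ^ (n + 1) - h =
        (v ^ (n + 1) - rootSeq n h a j ^ (n + 1)) - (h - rootSeq n h a j ^ (n + 1)) := by ring
    rw [hrw]
    exact dvd_sub hd1 hd2
  have := (PowerSeries.X_pow_dvd_iff.mp hd3) j (by omega)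
  rw [map_sub, sub_eq_zero] at this
  exact this

private lemma eq_C_of_pow_eq_one {n : ℕ} (hn : n ≠ 0) (ζ : HahnSeries ℚ ℂ) (hz : ζ ^ n = 1) :
    ∃ a : ℂ, ζ = HahnSeries.C a := by
  classical
  set q : Polynomial ℂ := Polynomial.X ^ n - Polynomial.C 1 with hq'
  have hq : q.Monic := Polynomial.monic_X_pow_sub_C 1 hn
  have hsplit : q.Splits := IsAlgClosed.splits q
  have hfact := hsplit.eq_prod_roots_of_monic hq
  set e : Polynomial ℂ →+* HahnSeries ℚ ℂ :=
    Polynomial.eval₂RingHom (HahnSeries.C : ℂ →+* HahnSeries ℚ ℂ) ζ with he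
  have h0 : e q = 0 := by
    have h1 : e q = ζ ^ n - 1 := by
      rw [hq', map_sub, map_pow]
      simp [he]
    rw [h1, hz, sub_self]
  rw [hfact, map_multiset_prod, Multiset.map_map] at h0
  obtain ⟨b, hb, hb0⟩ := Multiset.mem_map.mp (Multiset.prod_eq_zero_iff.mp h0)
  refine ⟨b, ?_⟩
  have hEb : e (Polynomial.X - Polynomial.C b) = ζ - HahnSeries.C b := by
    rw [map_sub]
    simp [he]
  rw [Function.comp_apply, hEb] at hb0
  exact sub_eq_zero.mp hb0

private lemma order_ofPowerSeries (f : PowerSeries ℂ) (N : ℕ) (hN : f.order = (N : ℕ∞)) :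
    (HahnSeries.ofPowerSeries ℚ ℂ f).order = (N : ℚ) := by
  obtain ⟨hcN, hlt⟩ := PowerSeries.order_eq_nat.mp hN
  set F := HahnSeries.ofPowerSeries ℚ ℂ f with hF
  have hFN : F.coeff (N : ℚ) ≠ 0 := by
    rw [hF, HahnSeries.ofPowerSeries_apply_coeff]; exact hcN
  have hF0 : F ≠ 0 := by
    intro h0; apply hFN; rw [h0]; simp
  have hsupp : ∀ q : ℚ, F.coeff q ≠ 0 → (N : ℚ) ≤ q := by
    intro q hq
    rw [hF, HahnSeries.ofPowerSeries_apply] at hq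
    have hmem : q ∈ (fun i : ℕ => (i : ℚ)) '' (HahnSeries.toPowerSeries.symm f).support := by
      by_contra hcon
      exact hq (HahnSeries.embDomain_notin_image_support hcon)
    obtain ⟨j, hjs, rfl⟩ := hmem
    have hj : PowerSeries.coeff j f ≠ 0 := by
      simpa using hjs
    have hNj : N ≤ j := by
      by_contra hcon
      exact hj (hlt j (by omega))
    show (N : ℚ) ≤ (j : ℚ)
    exact_mod_cast hNj
  apply le_antisymm
  · exact HahnSeries.order_le_of_coeff_ne_zero hFN
  · exact hsupp _ (HahnSeries.coeff_order_eq_zero.not.mpr hF0)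

private lemma psOrder_pow (f : PowerSeries ℂ) (c : ℕ) : (f ^ c).order = c • f.order := by
  induction c with
  | zero => simpa using PowerSeries.order_one
  | succ c ih => rw [pow_succ, PowerSeries.order_mul, ih, succ_nsmul]

private lemma psOrder_prod {m : ℕ} (f : Fin m → PowerSeries ℂ) :
    (∏ i, f i).order = ∑ i, (f i).order := by
  classical
  suffices h : ∀ s : Finset (Fin m), (∏ i ∈ s, f i).order = ∑ i ∈ s, (f i).order from h _
  intro s
  induction s using Finset.induction with
  | empty => simpa using PowerSeries.order_one
  | insert _ _ hnot ih =>
    rw [Finset.prod_insert hnot, Finset.sum_insert hnot, PowerSeries.order_mul, ih]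

/-- Let `x_1, …, x_m` be nonzero power series with `x_i` of order `l_i`, let `X_i` be the
image of `x_i` in the Hahn series field `HahnSeries(ℚ, ℂ)`, and let `y_i` be any Hahn
series with `y_i ^ n = X_i`. Then `y_1^{c_1} ⋯ y_m^{c_m}` lies in the image of `ℂ[[t]]`
in `HahnSeries(ℚ, ℂ)` if and only if `n` divides `c_1 l_1 + ⋯ + c_m l_m`. -/
theorem prod_root_powers_mem_powerSeries_iff
    (n m : ℕ) (hn : 1 ≤ n) (hm : 1 ≤ m)
    (x : Fin m → PowerSeries ℂ) (l : Fin m → ℕ)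
    (hx0 : ∀ i, x i ≠ 0) (hxord : ∀ i, (x i).order = (l i : ℕ∞))
    (y : Fin m → HahnSeries ℚ ℂ)
    (hy : ∀ i, (y i) ^ n = HahnSeries.ofPowerSeries ℚ ℂ (x i))
    (c : Fin m → ℕ) :
    (∃ f : PowerSeries ℂ, HahnSeries.ofPowerSeries ℚ ℂ f = ∏ i, (y i) ^ (c i)) ↔
      n ∣ ∑ i, c i * l i := by
  have hn0 : n ≠ 0 := by omega
  have hφinj : Function.Injective (HahnSeries.ofPowerSeries ℚ ℂ) :=
    HahnSeries.ofPowerSeries_injective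
  have hy0 : ∀ i, y i ≠ 0 := by
    intro i h0
    apply hx0 i
    apply hφinj
    rw [← hy i, h0, zero_pow hn0, map_zero]
  set z : HahnSeries ℚ ℂ := ∏ i, (y i) ^ (c i) with hzdef
  set g : PowerSeries ℂ := ∏ i, (x i) ^ (c i) with hgdef
  have hz0 : z ≠ 0 := Finset.prod_ne_zero_iff.mpr fun i _ => pow_ne_zero _ (hy0 i)
  have hg0 : g ≠ 0 := Finset.prod_ne_zero_iff.mpr fun i _ => pow_ne_zero _ (hx0 i)
  have hgord : g.order = ((∑ i, c i * l i : ℕ) : ℕ∞) := by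
    rw [hgdef, psOrder_prod]
    rw [Nat.cast_sum]
    refine Finset.sum_congr rfl fun i _ => ?_
    rw [psOrder_pow, hxord i]
    push_cast
    rw [nsmul_eq_mul]
  have hzn : z ^ n = HahnSeries.ofPowerSeries ℚ ℂ g := by
    rw [hzdef, hgdef, ← Finset.prod_pow, map_prod]
    refine Finset.prod_congr rfl fun i _ => ?_
    rw [← pow_mul, mul_comm (c i) n, pow_mul, hy i, ← map_pow]
  constructor
  · rintro ⟨f, hf⟩
    have hf0 : f ≠ 0 := by
      intro h0
      apply hz0
      rw [← hf, h0, map_zero]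
    obtain ⟨N, hNf⟩ : ∃ N : ℕ, f.order = (N : ℕ∞) := by
      have := PowerSeries.order_eq_top.not.mpr hf0
      obtain ⟨N, hN⟩ := WithTop.ne_top_iff_exists.mp this
      exact ⟨N, hN.symm⟩
    have hzord : z.order = (N : ℚ) := by
      rw [← hf]; exact order_ofPowerSeries f N hNf
    have h1 : (z ^ n).order = n • z.order := HahnSeries.order_pow z n
    have h2 : (z ^ n).order = ((∑ i, c i * l i : ℕ) : ℚ) := by
      rw [hzn]; exact order_ofPowerSeries g _ hgord
    have h3 : ((n * N : ℕ) : ℚ) = ((∑ i, c i * l i : ℕ) : ℚ) := by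
      rw [← h2, h1, hzord, nsmul_eq_mul]
      push_cast
      ring
    exact ⟨N, (Nat.cast_injective h3).symm⟩
  · rintro ⟨k, hk⟩
    have hgord' : g.order = ((n * k : ℕ) : ℕ∞) := by rw [hgord, hk]
    have hX : PowerSeries.X ^ (n * k) ∣ g := by
      rw [PowerSeries.X_pow_dvd_iff]
      intro i hi
      refine PowerSeries.coeff_of_lt_order i ?_
      rw [hgord']
      exact_mod_cast hi
    obtain ⟨h, hh⟩ := hX
    have hch : PowerSeries.constantCoeff h ≠ 0 := by
      have hc := (PowerSeries.order_eq_nat.mp hgord').1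
      intro h0
      apply hc
      rw [hh]
      have h4 : PowerSeries.coeff (0 + n * k) (PowerSeries.X ^ (n * k) * h) =
          PowerSeries.coeff 0 h := PowerSeries.coeff_X_pow_mul h (n * k) 0
      rw [zero_add] at h4
      rw [h4, PowerSeries.coeff_zero_eq_constantCoeff_apply, h0]
    obtain ⟨v, hv⟩ := exists_pow_root (n - 1) h hch
    have hv' : v ^ n = h := by rwa [Nat.sub_add_cancel hn] at hv
    have hvne : v ≠ 0 := by
      intro h0
      apply hch
      rw [← hv', h0, zero_pow hn0, map_zero]
    have hf0n : (PowerSeries.X ^ k * v) ^ n = g := by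
      rw [mul_pow, ← pow_mul, hv', mul_comm k n, ← hh]
    have hf00 : (PowerSeries.X ^ k * v : PowerSeries ℂ) ≠ 0 :=
      mul_ne_zero (pow_ne_zero _ PowerSeries.X_ne_zero) hvne
    have hz00 : HahnSeries.ofPowerSeries ℚ ℂ (PowerSeries.X ^ k * v) ≠ 0 := by
      intro h0
      apply hf00
      apply hφinj
      rw [h0, map_zero]
    have hz0n : (HahnSeries.ofPowerSeries ℚ ℂ (PowerSeries.X ^ k * v)) ^ n = z ^ n := by
      rw [← map_pow, hf0n, hzn]
    have hζ1 : (z * (HahnSeries.ofPowerSeries ℚ ℂ (PowerSeries.X ^ k * v))⁻¹) ^ n = 1 := by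
      rw [mul_pow, inv_pow, hz0n, mul_inv_cancel₀ (pow_ne_zero _ hz0)]
    obtain ⟨a, ha⟩ := eq_C_of_pow_eq_one hn0 _ hζ1
    refine ⟨PowerSeries.C a * (PowerSeries.X ^ k * v), ?_⟩
    rw [map_mul, HahnSeries.ofPowerSeries_C, ← ha, mul_assoc,
      inv_mul_cancel₀ hz00, mul_one]
end
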